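/- arXiv:0811.1336 — 5 statements merged into one kernel-verified Lean document; each statement's English description precedes it below -/
import Mathlib

section
/- Let X be a nonempty set, W = W(X) the free monoid on X, and F = A × W the free right W-act with basis A (action (a,w)·u = (a,wu)). Let P ⊆ F be a subact (a subset closed under the action) and let B_P be its canonical basis, consisting of all elements (a,1) ∈ P together with all elements (a,wx) ∈ P with w ∈ W, x ∈ X such that (a,w) ∉ P. Then every element of P can be written in the form b·u with b ∈ B_P and u ∈ W, and this expression is unique: if b·u = b'·u' with b, b' ∈ B_P and u, u' ∈ W, then b = b' and u = u'. (In particular, P is a free W-act with basis B_P.) -/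
/-- A subset `P` of the free right act `F = A × W(X)` (with action `(a,w)·u = (a, w*u)`)
is a subact if it is closed under the action of the free monoid `W(X)`. -/
def IsSubact {A X : Type*} (P : Set (A × FreeMonoid X)) : Prop :=
  ∀ p ∈ P, ∀ u : FreeMonoid X, (p.1, p.2 * u) ∈ P

/-- The canonical basis of a subact `P` of the free act `A × W(X)`: all `(a,1) ∈ P`
together with all `(a, w*x) ∈ P` (with `w ∈ W(X)`, `x ∈ X`) such that `(a,w) ∉ P`. -/
def canonicalBasis {A X : Type*} (P : Set (A × FreeMonoid X)) : Set (A × FreeMonoid X) :=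
  {p | p ∈ P ∧ (p.2 = 1 ∨
    ∃ (w : FreeMonoid X) (x : X), p.2 = w * FreeMonoid.of x ∧ (p.1, w) ∉ P)}

/-!
Existence: for `(a, w) ∈ P`, the shortest prefix `w₀` of `w` with `(a, w₀) ∈ P` gives a basis
element `(a, w₀)`, and `w = w₀ u`.
Uniqueness: `W(X)` is equidivisible, so `b · u = b' · u'` makes one basis word a prefix `w` of the
other, `w t`. If `t ≠ 1`, write `t = v x`: the basis element `(a, (w v) x)` then needs
`(a, w v) ∉ P`, whereas `(a, w) ∈ P` and `P` is a subact.
-/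

namespace FreeMonoid

variable {α : Type*}

theorem mul_of_inj {w w' : FreeMonoid α} {x x' : α} :
    w * of x = w' * of x' ↔ w = w' ∧ x = x' := by
  refine ⟨fun h => ?_, fun ⟨hw, hx⟩ => hw ▸ hx ▸ rfl⟩
  obtain ⟨hw, hx⟩ := List.append_inj' h rfl
  exact ⟨hw, List.singleton_injective hx⟩

theorem eq_one_or_eq_mul_of (w : FreeMonoid α) : w = 1 ∨ ∃ v x, w = v * of x :=
  List.eq_nil_or_concat' w

theorem mul_eq_mul_iff {a b c d : FreeMonoid α} :
    a * b = c * d ↔ (∃ t, c = a * t ∧ b = t * d) ∨ ∃ t, a = c * t ∧ d = t * b :=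
  List.append_eq_append_iff

@[elab_as_elim]
theorem inductionOn_mul_of {motive : FreeMonoid α → Prop} (w : FreeMonoid α) (one : motive 1)
    (mul_of : ∀ v x, motive v → motive (v * of x)) : motive w :=
  List.reverseRecOn (motive := fun l => motive (ofList l)) w one fun v x => mul_of v x

end FreeMonoid

section canonicalBasis

open FreeMonoid

variable {A X : Type*} {P : Set (A × FreeMonoid X)}

theorem exists_mem_canonicalBasis_eq_mul {a : A} (w : FreeMonoid X) (h : (a, w) ∈ P) :
    ∃ b ∈ canonicalBasis P, ∃ u, (a, w) = (b.1, b.2 * u) := by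
  induction w using FreeMonoid.inductionOn_mul_of with
  | one => exact ⟨(a, 1), ⟨h, Or.inl rfl⟩, 1, rfl⟩
  | mul_of v x ih =>
    by_cases hv : (a, v) ∈ P
    · obtain ⟨b, hb, u, hu⟩ := ih hv
      obtain ⟨rfl, rfl⟩ := Prod.mk.inj hu
      exact ⟨b, hb, u * of x, by rw [mul_assoc]⟩
    · exact ⟨(a, v * of x), ⟨h, Or.inr ⟨v, x, rfl, hv⟩⟩, 1, by simp⟩

theorem eq_one_of_mem_canonicalBasis_of_eq_mul (hP : IsSubact P) {b b' : A × FreeMonoid X}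
    (hb : b ∈ canonicalBasis P) (hb' : b' ∈ canonicalBasis P) (h₁ : b.1 = b'.1)
    {t : FreeMonoid X} (h₂ : b'.2 = b.2 * t) : t = 1 := by
  obtain rfl | ⟨v, x, rfl⟩ := eq_one_or_eq_mul_of t
  · rfl
  rw [← mul_assoc] at h₂
  rcases hb'.2 with h | ⟨w, y, hw, hw_not⟩
  · have := congrArg length (h₂.symm.trans h)
    simp [length_mul, length_of, length_one] at this
  · obtain ⟨rfl, -⟩ := mul_of_inj.mp (h₂.symm.trans hw)
    exact absurd (h₁ ▸ hP b hb.1 v) hw_not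

theorem eq_of_mem_canonicalBasis_of_mul_eq (hP : IsSubact P) {b b' : A × FreeMonoid X}
    (hb : b ∈ canonicalBasis P) (hb' : b' ∈ canonicalBasis P) {u u' : FreeMonoid X}
    (h : (b.1, b.2 * u) = (b'.1, b'.2 * u')) : b = b' ∧ u = u' := by
  obtain ⟨h₁, h₂⟩ := Prod.mk.inj h
  rcases mul_eq_mul_iff.mp h₂ with ⟨t, ht, hu⟩ | ⟨t, ht, hu⟩
  · obtain rfl := eq_one_of_mem_canonicalBasis_of_eq_mul hP hb hb' h₁ ht
    rw [mul_one] at ht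
    rw [one_mul] at hu
    exact ⟨Prod.ext h₁ ht.symm, hu⟩
  · obtain rfl := eq_one_of_mem_canonicalBasis_of_eq_mul hP hb' hb h₁.symm ht
    rw [mul_one] at ht
    rw [one_mul] at hu
    exact ⟨Prod.ext h₁ ht, hu.symm⟩

end canonicalBasis

theorem subact_free_general {A X : Type*}
    (P : Set (A × FreeMonoid X)) (hP : IsSubact P) :
    (∀ p ∈ P, ∃ b ∈ canonicalBasis P, ∃ u : FreeMonoid X, p = (b.1, b.2 * u)) ∧
    (∀ b ∈ canonicalBasis P, ∀ b' ∈ canonicalBasis P, ∀ u u' : FreeMonoid X,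
      (b.1, b.2 * u) = (b'.1, b'.2 * u') → b = b' ∧ u = u') :=
  ⟨fun p hp => exists_mem_canonicalBasis_eq_mul p.2 hp,
    fun _ hb _ hb' _ _ => eq_of_mem_canonicalBasis_of_mul_eq hP hb hb'⟩

/-- Every element of a subact `P` of a free act over a free monoid is uniquely of the
form `b · u` with `b ∈ B_P` and `u ∈ W(X)`; i.e. `P` is free with basis `B_P`. -/
theorem subact_free {A X : Type*} [Nonempty X]
    (P : Set (A × FreeMonoid X)) (hP : IsSubact P) :
    (∀ p ∈ P, ∃ b ∈ canonicalBasis P, ∃ u : FreeMonoid X, p = (b.1, b.2 * u)) ∧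
    (∀ b ∈ canonicalBasis P, ∀ b' ∈ canonicalBasis P, ∀ u u' : FreeMonoid X,
      (b.1, b.2 * u) = (b'.1, b'.2 * u') → b = b' ∧ u = u') :=
  subact_free_general P hP
end

section
/- Let F be the free group of finite rank r ≥ 1 and H a subgroup of F such that every element of H has even reduced word length (an 'even' subgroup). For n ∈ ℕ let v(n) be the (finite) number of right cosets Hg of length n, where the length of a coset is min{|h| : h ∈ Hg}. Then there exists a free basis S of H such that, writing B = S ∪ S⁻¹ and letting b(m) be the number of elements of B of reduced word length m: b(m) = 0 for all odd m; b(2) = 4r − 2v(1); and for every n ≥ 1, b(2n) + b(2n+2) = 2((2r−1)v(n) − v(n+1)). (Equivalently, with d(n) = b(2n)/2 and Ĥ(B,t) = Σ_n d(n)t^n, one has Ĥ(B,t) = (2rt/(t+1) − 1)·H(F/H,t) + 1, so the Hilbert series of the set of free generators is completely recovered from the Hilbert series of F/H.) -/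
noncomputable section

/-- The length of a right coset `Hg` of a subgroup `H` of a free group:
the minimum of the reduced word lengths of the elements of the coset. -/
def cosetLen {r : ℕ} (H : Subgroup (FreeGroup (Fin r)))
    (c : Quotient (QuotientGroup.rightRel H)) : ℕ :=
  sInf (FreeGroup.norm '' {g | Quotient.mk (QuotientGroup.rightRel H) g = c})

/-!
Pick geodesic representatives `t_c` of the right cosets forming a prefix-closed (Schreier)
transversal. The Schreier generators `t_c a t_{ca}⁻¹` that are not `1` form a free basis of `H`
together with their inverses, one pair for each edge of the Schreier graph outside the spanning
tree; freeness is witnessed by the Reidemeister–Schreier rewriting map, which sends each of them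
to a distinct free generator.

Evenness of `H` forces every edge of the Schreier graph to join cosets of lengths `n` and `n + 1`,
and then the Schreier generator of a non-tree edge is a reduced word of length `2n + 2`. Among the
`2r v(n)` oriented edges leaving level `n`, `A(n)` go up and `A(n - 1)` go down, and exactly
`v(n + 1)` of the upward ones are tree edges. Hence `b(2n + 2) = 2 (A(n) - v(n + 1))`, and
eliminating `A` gives the formulas.
-/

open QuotientGroup
open scoped RightActions

section RightAction

variable {G β : Type*} [Group G] [MulAction Gᵐᵒᵖ β]

theorem op_smul_op_smul_inv (b : β) (g : G) : b <• g <• g⁻¹ = b := by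
  rw [op_smul_op_smul, mul_inv_cancel, MulOpposite.op_one, one_smul]

theorem op_smul_inv_op_smul (b : β) (g : G) : b <• g⁻¹ <• g = b := by
  rw [op_smul_op_smul, inv_mul_cancel, MulOpposite.op_one, one_smul]

end RightAction

section RightCosets

variable {G : Type*} [Group G] (H : Subgroup G)

instance : MulAction Gᵐᵒᵖ (Quotient (rightRel H)) where
  smul g := Quotient.map' (· * g.unop) fun a b hab => by
    rw [rightRel_apply] at hab ⊢
    simpa [mul_assoc] using hab
  one_smul c := Quotient.inductionOn' c fun a => congrArg _ (mul_one a)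
  mul_smul g g' c := Quotient.inductionOn' c fun a => congrArg _ (mul_assoc a _ _).symm

variable {H}

theorem QuotientGroup.mk_rightRel_op_smul (a g : G) :
    Quotient.mk (rightRel H) a <• g = Quotient.mk (rightRel H) (a * g) := rfl

theorem QuotientGroup.mk_rightRel_eq_iff {a b : G} :
    Quotient.mk (rightRel H) a = Quotient.mk (rightRel H) b ↔ b * a⁻¹ ∈ H :=
  Quotient.eq.trans rightRel_apply

theorem QuotientGroup.mk_rightRel_one_op_smul (g : G) :
    Quotient.mk (rightRel H) 1 <• g = Quotient.mk (rightRel H) g :=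
  congrArg _ (one_mul g)

theorem QuotientGroup.mk_rightRel_one_op_smul_of_mem {h : G} (hh : h ∈ H) :
    Quotient.mk (rightRel H) 1 <• h = Quotient.mk (rightRel H) 1 :=
  mk_rightRel_eq_iff.2 (by simpa using hh)

end RightCosets

namespace FreeGroup

section Words

variable {α : Type*}

theorem inv_mk_singleton (a : α × Bool) : (mk [a])⁻¹ = mk [(a.1, !a.2)] := by
  simp [inv_mk, invRev]

theorem of_ne_inv_of (x y : α) : of x ≠ (of y)⁻¹ := by
  intro h
  have := congrArg (Multiplicative.toAdd ∘ lift fun _ : α => Multiplicative.ofAdd (1 : ℤ)) h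
  simp at this

variable [DecidableEq α]

@[simp] theorem toWord_mk_singleton (a : α × Bool) : (mk [a]).toWord = [a] := by
  rw [toWord_mk, IsReduced.singleton.reduce_eq]

@[simp] theorem norm_mk_singleton (a : α × Bool) : norm (mk [a]) = 1 := by
  simp [norm]

theorem norm_mk_of_isReduced {L : List (α × Bool)} (h : IsReduced L) :
    norm (mk L) = L.length := by
  rw [norm, toWord_mk, h.reduce_eq]

theorem IsReduced.invRev {L : List (α × Bool)} (h : IsReduced L) : IsReduced (invRev L) := by
  rw [isReduced_iff_reduce_eq, reduce_invRev, h.reduce_eq]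

theorem exists_norm_add_norm_eq (x y : FreeGroup α) :
    ∃ n, norm x + norm y = norm (x * y) + 2 * n := by
  obtain ⟨n, hn⟩ := (reduce.red (L := x.toWord ++ y.toWord)).length
  exact ⟨n, by simpa [norm, toWord_mul] using hn⟩

theorem toWord_mul_mk_singleton {x : FreeGroup α} {a : α × Bool}
    (h : norm (x * mk [a]) = norm x + 1) : (x * mk [a]).toWord = x.toWord ++ [a] :=
  (toWord_mul_sublist x (mk [a])).eq_of_length (by simpa [norm] using h)

theorem isReduced_toWord_append_singleton (x : FreeGroup α) (a : α × Bool)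
    (h : ∀ W, x.toWord ≠ W ++ [(a.1, !a.2)]) : IsReduced (x.toWord ++ [a]) := by
  rcases List.eq_nil_or_concat x.toWord with hx | ⟨W, b, hx⟩
  · simp [hx, IsReduced.singleton]
  rw [List.concat_eq_append] at hx
  have hba : IsReduced ([b] ++ [a]) := by
    rw [List.singleton_append, isReduced_cons_cons]
    refine ⟨fun h₁ => ?_, IsReduced.singleton⟩
    obtain ⟨b₁, b₂⟩ := b
    obtain ⟨a₁, a₂⟩ := a
    simp only at h₁
    subst h₁
    have := h W
    rw [hx] at this
    cases a₂ <;> cases b₂ <;> simp_all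
  rw [hx]
  exact (hx ▸ isReduced_toWord).append_overlap hba (List.cons_ne_nil _ _)

end Words

section Edges

variable {α β : Type*} [MulAction (FreeGroup α)ᵐᵒᵖ β]

theorem op_smul_mk_singleton_op_smul_mk_singleton (b : β) (a : α × Bool) :
    b <• mk [a] <• mk [(a.1, !a.2)] = b := by
  rw [← inv_mk_singleton, op_smul_op_smul_inv]

/-- An oriented edge `(c, a)` of the Schreier graph goes from `c` to `c <• mk [a]`. -/
def reverseEdge (p : β × (α × Bool)) : β × (α × Bool) :=
  (p.1 <• mk [p.2], (p.2.1, !p.2.2))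

theorem reverseEdge_involutive :
    Function.Involutive (reverseEdge : β × (α × Bool) → β × (α × Bool)) := fun p => by
  simp only [reverseEdge, op_smul_mk_singleton_op_smul_mk_singleton, Bool.not_not]

theorem ncard_preimage_reverseEdge (s : Set (β × (α × Bool))) :
    (reverseEdge ⁻¹' s).ncard = s.ncard :=
  Set.ncard_preimage_of_injective_subset_range reverseEdge_involutive.injective
    (by rw [reverseEdge_involutive.surjective.range_eq]; exact Set.subset_univ s)

end Edges

variable {α : Type*} [DecidableEq α]

section CosetNorm

variable (H : Subgroup (FreeGroup α))

/-- `cosetLen` over an arbitrary alphabet. -/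
def cosetNorm (c : Quotient (rightRel H)) : ℕ :=
  sInf (norm '' {g | Quotient.mk (rightRel H) g = c})

def IsEvenSubgroup : Prop := ∀ h ∈ H, Even (norm h)

variable {H}

theorem exists_norm_eq_cosetNorm (c : Quotient (rightRel H)) :
    ∃ g, Quotient.mk (rightRel H) g = c ∧ norm g = cosetNorm H c := by
  obtain ⟨g, rfl⟩ := Quotient.exists_rep c
  exact Nat.sInf_mem (s := norm '' _) ⟨_, g, rfl, rfl⟩

theorem cosetNorm_mk_le (g : FreeGroup α) :
    cosetNorm H (Quotient.mk (rightRel H) g) ≤ norm g :=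
  Nat.sInf_le ⟨g, rfl, rfl⟩

theorem cosetNorm_op_smul_le (c : Quotient (rightRel H)) (g : FreeGroup α) :
    cosetNorm H (c <• g) ≤ cosetNorm H c + norm g := by
  obtain ⟨g₀, rfl, hg₀⟩ := exists_norm_eq_cosetNorm c
  exact (cosetNorm_mk_le _).trans (hg₀ ▸ norm_mul_le g₀ g)

theorem cosetNorm_le_op_smul_mk_singleton (c : Quotient (rightRel H)) (a : α × Bool) :
    cosetNorm H c ≤ cosetNorm H (c <• mk [a]) + 1 := by
  have := cosetNorm_op_smul_le (c <• mk [a]) (mk [a])⁻¹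
  rwa [op_smul_op_smul_inv, norm_inv_eq, norm_mk_singleton] at this

theorem cosetNorm_eq_zero {c : Quotient (rightRel H)} :
    cosetNorm H c = 0 ↔ c = Quotient.mk (rightRel H) 1 := by
  refine ⟨fun hc => ?_, fun hc => Nat.le_zero.1 (hc ▸ cosetNorm_mk_le 1)⟩
  obtain ⟨g, rfl, hg⟩ := exists_norm_eq_cosetNorm c
  rw [norm_eq_zero.1 (hg.trans hc)]

theorem setOf_cosetNorm_eq_zero :
    {c : Quotient (rightRel H) | cosetNorm H c = 0} = {Quotient.mk (rightRel H) 1} :=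
  Set.ext fun _ => cosetNorm_eq_zero

/-- The parity of `norm` is a homomorphism to `ℤ/2` whose kernel contains `H`, so adjacent cosets
have lengths of different parities. -/
theorem IsEvenSubgroup.cosetNorm_op_smul_mk_singleton (hH : IsEvenSubgroup H)
    (c : Quotient (rightRel H)) (a : α × Bool) :
    cosetNorm H (c <• mk [a]) = cosetNorm H c + 1 ∨
      cosetNorm H c = cosetNorm H (c <• mk [a]) + 1 := by
  obtain ⟨g, rfl, hg⟩ := exists_norm_eq_cosetNorm c
  obtain ⟨g', hg'c, hg'⟩ := exists_norm_eq_cosetNorm (Quotient.mk (rightRel H) g <• mk [a])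
  have hmem : g' * (g * mk [a])⁻¹ ∈ H := mk_rightRel_eq_iff.1 hg'c.symm
  obtain ⟨k, hk⟩ := hH _ hmem
  obtain ⟨m, hm⟩ := exists_norm_add_norm_eq (g' * (g * mk [a])⁻¹) (g * mk [a])
  obtain ⟨n, hn⟩ := exists_norm_add_norm_eq g (mk [a])
  rw [inv_mul_cancel_right] at hm
  have := cosetNorm_op_smul_le (Quotient.mk (rightRel H) g) (mk [a])
  have := cosetNorm_le_op_smul_mk_singleton (Quotient.mk (rightRel H) g) a
  rw [norm_mk_singleton] at *
  omega

end CosetNorm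

section Transversal

variable {H : Subgroup (FreeGroup α)}

theorem exists_cosetNorm_op_smul_inv_lt {c : Quotient (rightRel H)} (hc : cosetNorm H c ≠ 0) :
    ∃ a : α × Bool, cosetNorm H (c <• (mk [a])⁻¹) < cosetNorm H c := by
  obtain ⟨g, rfl, hg⟩ := exists_norm_eq_cosetNorm c
  rcases List.eq_nil_or_concat g.toWord with hW | ⟨W, a, hW⟩
  · exact absurd (hg ▸ congrArg List.length hW) hc
  refine ⟨a, ?_⟩
  have hga : g * (mk [a])⁻¹ = mk W := by
    rw [← mk_toWord (x := g), hW, List.concat_eq_append, ← mul_mk, mul_inv_cancel_right]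
  have hlen : norm g = W.length + 1 := by rw [norm, hW, List.length_concat]
  calc cosetNorm H (Quotient.mk (rightRel H) g <• (mk [a])⁻¹)
      ≤ norm (mk W) := hga ▸ cosetNorm_mk_le _
    _ ≤ W.length := norm_mk_le
    _ < cosetNorm H (Quotient.mk (rightRel H) g) := by omega

def parentLetter (c : Quotient (rightRel H)) (hc : cosetNorm H c ≠ 0) : α × Bool :=
  (exists_cosetNorm_op_smul_inv_lt hc).choose

variable (H) in
def schreierRep (c : Quotient (rightRel H)) : FreeGroup α :=
  if hc : cosetNorm H c = 0 then 1
  else schreierRep (c <• (mk [parentLetter c hc])⁻¹) * mk [parentLetter c hc]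
termination_by cosetNorm H c
decreasing_by exact (exists_cosetNorm_op_smul_inv_lt hc).choose_spec

theorem schreierRep_of_cosetNorm_eq_zero {c : Quotient (rightRel H)} (hc : cosetNorm H c = 0) :
    schreierRep H c = 1 := by
  rw [schreierRep, dif_pos hc]

theorem schreierRep_eq_mul {c : Quotient (rightRel H)} (hc : cosetNorm H c ≠ 0) :
    schreierRep H c =
      schreierRep H (c <• (mk [parentLetter c hc])⁻¹) * mk [parentLetter c hc] := by
  rw [schreierRep, dif_neg hc]

theorem cosetNorm_parent_add_one {c : Quotient (rightRel H)} (hc : cosetNorm H c ≠ 0) :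
    cosetNorm H (c <• (mk [parentLetter c hc])⁻¹) + 1 = cosetNorm H c := by
  have hle := cosetNorm_op_smul_le (c <• (mk [parentLetter c hc])⁻¹) (mk [parentLetter c hc])
  rw [op_smul_inv_op_smul, norm_mk_singleton] at hle
  exact le_antisymm (exists_cosetNorm_op_smul_inv_lt hc).choose_spec hle

theorem mk_schreierRep_and_norm (c : Quotient (rightRel H)) :
    Quotient.mk (rightRel H) (schreierRep H c) = c ∧
      norm (schreierRep H c) = cosetNorm H c := by
  induction c using schreierRep.induct H with
  | case1 c hc =>
    rw [schreierRep_of_cosetNorm_eq_zero hc, norm_one, hc]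
    exact ⟨(cosetNorm_eq_zero.1 hc).symm, rfl⟩
  | case2 c hc ih =>
    rw [schreierRep_eq_mul hc]
    set a := parentLetter c hc
    have hmk : Quotient.mk (rightRel H) (schreierRep H (c <• (mk [a])⁻¹) * mk [a]) = c := by
      rw [← mk_rightRel_op_smul, ih.1, op_smul_inv_op_smul]
    refine ⟨hmk, le_antisymm ?_ ?_⟩
    · calc _ ≤ _ := norm_mul_le _ _
        _ = cosetNorm H c := by rw [ih.2, norm_mk_singleton, cosetNorm_parent_add_one]
    · simpa only [hmk] using
        cosetNorm_mk_le (H := H) (schreierRep H (c <• (mk [a])⁻¹) * mk [a])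

theorem mk_schreierRep (c : Quotient (rightRel H)) :
    Quotient.mk (rightRel H) (schreierRep H c) = c :=
  (mk_schreierRep_and_norm c).1

theorem norm_schreierRep (c : Quotient (rightRel H)) :
    norm (schreierRep H c) = cosetNorm H c :=
  (mk_schreierRep_and_norm c).2

theorem toWord_schreierRep {c : Quotient (rightRel H)} (hc : cosetNorm H c ≠ 0) :
    (schreierRep H c).toWord =
      (schreierRep H (c <• (mk [parentLetter c hc])⁻¹)).toWord ++ [parentLetter c hc] := by
  rw [schreierRep_eq_mul hc]
  refine toWord_mul_mk_singleton ?_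
  rw [← schreierRep_eq_mul hc, norm_schreierRep, norm_schreierRep, cosetNorm_parent_add_one]

theorem schreierRep_op_smul_inv_mul {c : Quotient (rightRel H)} {W : List (α × Bool)}
    {a : α × Bool} (h : (schreierRep H c).toWord = W ++ [a]) :
    schreierRep H (c <• (mk [a])⁻¹) * mk [a] = schreierRep H c := by
  have hc : cosetNorm H c ≠ 0 := by
    rw [← norm_schreierRep, norm, h]
    simp
  obtain ⟨-, ha⟩ := List.append_inj' (h.symm.trans (toWord_schreierRep hc)) rfl
  rw [List.singleton_inj.1 ha, ← schreierRep_eq_mul hc]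

theorem finite_setOf_cosetNorm_le [Finite α] (m : ℕ) :
    {c : Quotient (rightRel H) | cosetNorm H c ≤ m}.Finite := by
  refine ((List.finite_length_le (α × Bool) m).preimage
    (f := fun c : Quotient (rightRel H) => (schreierRep H c).toWord) fun c _ c' _ h => ?_).subset
    fun c hc => ?_
  · rw [← mk_schreierRep c, ← mk_schreierRep c', toWord_injective h]
  · rwa [Set.mem_preimage, Set.mem_ofPred_eq, ← norm, norm_schreierRep]

end Transversal

section SchreierGenerators

variable {H : Subgroup (FreeGroup α)}

variable (H) in
def schreierGen (c : Quotient (rightRel H)) (a : α × Bool) : FreeGroup α :=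
  schreierRep H c * mk [a] * (schreierRep H (c <• mk [a]))⁻¹

theorem schreierGen_mem (c : Quotient (rightRel H)) (a : α × Bool) : schreierGen H c a ∈ H :=
  mk_rightRel_eq_iff.1 <| by rw [← mk_rightRel_op_smul, mk_schreierRep, mk_schreierRep]

theorem schreierGen_eq_one_iff {c : Quotient (rightRel H)} {a : α × Bool} :
    schreierGen H c a = 1 ↔ schreierRep H c * mk [a] = schreierRep H (c <• mk [a]) :=
  mul_inv_eq_one

theorem schreierGen_parent_eq_one {c : Quotient (rightRel H)} (hc : cosetNorm H c ≠ 0) :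
    schreierGen H (c <• (mk [parentLetter c hc])⁻¹) (parentLetter c hc) = 1 := by
  rw [schreierGen_eq_one_iff, op_smul_inv_op_smul, ← schreierRep_eq_mul]

theorem schreierGen_reverse (c : Quotient (rightRel H)) (a : α × Bool) :
    schreierGen H (c <• mk [a]) (a.1, !a.2) = (schreierGen H c a)⁻¹ := by
  rw [schreierGen, schreierGen, op_smul_mk_singleton_op_smul_mk_singleton, ← inv_mk_singleton]
  group

/-- Since the transversal is prefix-closed, a Schreier generator other than `1` is a reduced
word `t_c a t_{ca}⁻¹` without cancellation. -/
theorem norm_schreierGen {c : Quotient (rightRel H)} {a : α × Bool}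
    (h : schreierGen H c a ≠ 1) :
    norm (schreierGen H c a) = cosetNorm H c + cosetNorm H (c <• mk [a]) + 1 := by
  set u := schreierRep H c
  set v := schreierRep H (c <• mk [a])
  have hu : IsReduced (u.toWord ++ [a]) := by
    refine isReduced_toWord_append_singleton u a fun W hW => h ?_
    have := schreierRep_op_smul_inv_mul hW
    rw [inv_mk_singleton, Bool.not_not] at this
    rw [schreierGen_eq_one_iff, ← this, mul_assoc, ← inv_mk_singleton, inv_mul_cancel, mul_one]
  have hv : IsReduced (v.toWord ++ [(a.1, !a.2)]) := by
    refine isReduced_toWord_append_singleton v _ fun W hW => h ?_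
    rw [Bool.not_not] at hW
    have := schreierRep_op_smul_inv_mul hW
    rw [op_smul_op_smul_inv] at this
    exact schreierGen_eq_one_iff.2 this
  have hv' : IsReduced ([a] ++ invRev v.toWord) := by
    simpa [invRev] using hv.invRev
  have hs : schreierGen H c a = mk (u.toWord ++ [a] ++ invRev v.toWord) := by
    rw [← mul_mk, ← mul_mk, ← inv_mk, mk_toWord, mk_toWord]
    rfl
  rw [hs, norm_mk_of_isReduced (hu.append_overlap hv' (List.cons_ne_nil _ _))]
  simp only [List.length_append, List.length_singleton, invRev_length]
  rw [← norm, ← norm, norm_schreierRep, norm_schreierRep]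
  omega

variable (H) in
def schreierBasis : Set (FreeGroup α) := {s | s ≠ 1 ∧ ∃ c i, schreierGen H c (i, true) = s}

theorem schreierGen_mem_closure (c : Quotient (rightRel H)) (a : α × Bool) :
    schreierGen H c a ∈ Subgroup.closure (schreierBasis H) := by
  by_cases h : schreierGen H c a = 1
  · rw [h]
    exact one_mem _
  obtain ⟨i, _ | _⟩ := a
  · have hrev := schreierGen_reverse c (i, false)
    rw [Bool.not_false] at hrev
    have hmem : schreierGen H (c <• mk [(i, false)]) (i, true) ∈ schreierBasis H :=
      ⟨hrev ▸ inv_ne_one.2 h, _, i, rfl⟩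
    simpa [hrev] using inv_mem (Subgroup.subset_closure hmem)
  · exact Subgroup.subset_closure ⟨h, c, i, rfl⟩

theorem schreierRep_mul_mul_inv_mem_closure (g : FreeGroup α) (c : Quotient (rightRel H)) :
    schreierRep H c * g * (schreierRep H (c <• g))⁻¹ ∈
      Subgroup.closure (schreierBasis H) := by
  induction g generalizing c with
  | C1 => simp
  | of i => exact schreierGen_mem_closure c (i, true)
  | inv_of i _ =>
    rw [of, inv_mk_singleton]
    exact schreierGen_mem_closure c _
  | mul g g' ihg ihg' =>
    have := mul_mem (ihg c) (ihg' (c <• g))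
    rw [op_smul_op_smul] at this
    convert this using 1
    group

theorem closure_schreierBasis : Subgroup.closure (schreierBasis H) = H := by
  refine le_antisymm ((Subgroup.closure_le H).2 ?_) fun h hh => ?_
  · rintro _ ⟨-, c, i, rfl⟩
    exact schreierGen_mem c _
  · have := schreierRep_mul_mul_inv_mem_closure h (Quotient.mk (rightRel H) 1)
    rwa [mk_rightRel_one_op_smul_of_mem hh,
      schreierRep_of_cosetNorm_eq_zero (cosetNorm_eq_zero.2 rfl), one_mul, inv_one, mul_one] at this

theorem range_lift_schreierBasis : (lift ((↑) : schreierBasis H → FreeGroup α)).range = H := by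
  rw [range_lift_eq_closure, Subtype.range_coe, closure_schreierBasis]

end SchreierGenerators

section Rewriting

variable {H : Subgroup (FreeGroup α)}

variable (H) in
/-- Non-tree edges are indexed by their positive orientation `(c, i)`, from `c` to `c <• of i`. -/
def edgeLabel (c : Quotient (rightRel H)) (a : α × Bool) :
    FreeGroup (Quotient (rightRel H) × α) :=
  if schreierGen H c a = 1 then 1
  else if a.2 then of (c, a.1) else (of (c <• mk [a], a.1))⁻¹

theorem edgeLabel_mul_edgeLabel_reverse (c : Quotient (rightRel H)) (a : α × Bool) :
    edgeLabel H c a * edgeLabel H (c <• mk [a]) (a.1, !a.2) = 1 := by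
  have hrev := schreierGen_reverse c a
  by_cases h : schreierGen H c a = 1
  · simp [edgeLabel, hrev, h]
  · have h' : schreierGen H (c <• mk [a]) (a.1, !a.2) ≠ 1 := hrev ▸ inv_ne_one.2 h
    have hback := op_smul_mk_singleton_op_smul_mk_singleton c a
    obtain ⟨i, _ | _⟩ := a <;> simp_all [edgeLabel]

theorem edgeLabel_injOn :
    Set.InjOn (fun p : Quotient (rightRel H) × (α × Bool) => edgeLabel H p.1 p.2)
      {p | schreierGen H p.1 p.2 ≠ 1} := by
  rintro ⟨c, i, _ | _⟩ h ⟨c', i', _ | _⟩ h' heq <;>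
    simp_all [edgeLabel, of_injective.eq_iff, of_ne_inv_of, (of_ne_inv_of _ _).symm]
  obtain ⟨hc, rfl⟩ := heq
  exact MulAction.injective _ hc

variable (H) in
def readWord :
    List (α × Bool) → Quotient (rightRel H) → FreeGroup (Quotient (rightRel H) × α)
  | [], _ => 1
  | a :: L, c => edgeLabel H c a * readWord L (c <• mk [a])

theorem readWord_append (L₁ L₂ : List (α × Bool)) (c : Quotient (rightRel H)) :
    readWord H (L₁ ++ L₂) c = readWord H L₁ c * readWord H L₂ (c <• mk L₁) := by
  induction L₁ generalizing c with
  | nil => rw [List.nil_append, readWord, one_mul, ← one_eq_mk, MulOpposite.op_one, one_smul]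
  | cons a L ih =>
    rw [List.cons_append, readWord, readWord, ih, mul_assoc, op_smul_op_smul, mul_mk]
    rfl

theorem readWord_eq_of_step {L₁ L₂ : List (α × Bool)} (h : Red.Step L₁ L₂)
    (c : Quotient (rightRel H)) : readWord H L₁ c = readWord H L₂ c := by
  cases h with | @not L L' i b =>
  rw [readWord_append, readWord_append, readWord, readWord, ← mul_assoc (edgeLabel H _ _),
    edgeLabel_mul_edgeLabel_reverse (a := (i, b)), one_mul,
    op_smul_mk_singleton_op_smul_mk_singleton _ (i, b)]

variable (H) in
/-- Reidemeister–Schreier rewriting: `read H g c` lists, with signs, the non-tree edges crossed by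
the path that starts at `c` and spells `g`. It sends each Schreier generator to its own edge
(`read_schreierGen`), which makes the Schreier generators free. -/
def read (g : FreeGroup α) (c : Quotient (rightRel H)) : FreeGroup (Quotient (rightRel H) × α) :=
  Quot.liftOn g (readWord H · c) fun _ _ h => readWord_eq_of_step h c

theorem read_mul (g g' : FreeGroup α) (c : Quotient (rightRel H)) :
    read H (g * g') c = read H g c * read H g' (c <• g) := by
  induction g using Quot.ind
  induction g' using Quot.ind
  exact readWord_append _ _ c

theorem read_mk_singleton (a : α × Bool) (c : Quotient (rightRel H)) :
    read H (mk [a]) c = edgeLabel H c a :=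
  mul_one _

theorem read_inv (g : FreeGroup α) (c : Quotient (rightRel H)) :
    read H g⁻¹ (c <• g) = (read H g c)⁻¹ := by
  refine eq_inv_of_mul_eq_one_right ?_
  rw [← read_mul, mul_inv_cancel]
  rfl

theorem read_schreierRep (c : Quotient (rightRel H)) :
    read H (schreierRep H c) (Quotient.mk (rightRel H) 1) = 1 := by
  induction c using schreierRep.induct H with
  | case1 c hc =>
    rw [schreierRep_of_cosetNorm_eq_zero hc]
    rfl
  | case2 c hc ih =>
    rw [schreierRep_eq_mul hc, read_mul, ih, mk_rightRel_one_op_smul, mk_schreierRep,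
      read_mk_singleton, edgeLabel, if_pos (schreierGen_parent_eq_one hc), one_mul]

theorem read_schreierGen (c : Quotient (rightRel H)) (a : α × Bool) :
    read H (schreierGen H c a) (Quotient.mk (rightRel H) 1) = edgeLabel H c a := by
  have hc : Quotient.mk (rightRel H) 1 <• (schreierRep H c * mk [a]) =
      Quotient.mk (rightRel H) 1 <• schreierRep H (c <• mk [a]) := by
    rw [op_smul_mul, mk_rightRel_one_op_smul, mk_schreierRep, mk_rightRel_one_op_smul,
      mk_schreierRep]
  rw [schreierGen, read_mul, read_mul, read_schreierRep, one_mul, mk_rightRel_one_op_smul,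
    mk_schreierRep, read_mk_singleton, hc, read_inv, read_schreierRep, inv_one, mul_one]

theorem schreierGen_injOn :
    Set.InjOn (fun p : Quotient (rightRel H) × (α × Bool) => schreierGen H p.1 p.2)
      {p | schreierGen H p.1 p.2 ≠ 1} := fun p hp q hq h =>
  edgeLabel_injOn hp hq <| by
    simpa only [read_schreierGen] using congrArg (read H · (Quotient.mk (rightRel H) 1)) h

variable (H) in
def readHom : H →* FreeGroup (Quotient (rightRel H) × α) where
  toFun h := read H h (Quotient.mk (rightRel H) 1)
  map_one' := rfl
  map_mul' h h' := by rw [Subgroup.coe_mul, read_mul, mk_rightRel_one_op_smul_of_mem h.2]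

theorem injective_lift_schreierBasis :
    Function.Injective (lift ((↑) : schreierBasis H → FreeGroup α)) := by
  choose c i hci using fun s : schreierBasis H => s.2.2
  have hmem z : lift ((↑) : schreierBasis H → FreeGroup α) z ∈ H :=
    range_lift_schreierBasis.le ⟨z, rfl⟩
  set φ := (lift ((↑) : schreierBasis H → FreeGroup α)).codRestrict H hmem
  have hcomp : (readHom H).comp φ = map fun s => (c s, i s) := by
    refine ext_hom _ _ fun s => ?_
    rw [MonoidHom.comp_apply, map.of]
    change read H (lift ((↑) : schreierBasis H → FreeGroup α) (of s)) _ = _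
    rw [lift_apply_of, ← hci, read_schreierGen, edgeLabel, if_neg (by rw [hci]; exact s.2.1),
      if_pos rfl]
  have hinj : Function.Injective fun s => (c s, i s) := fun s s' h => by
    simp only [Prod.mk.injEq] at h
    exact Subtype.ext (by rw [← hci, ← hci s', h.1, h.2])
  have hφ : Function.Injective φ := by
    refine Function.Injective.of_comp (f := readHom H) ?_
    rw [← MonoidHom.coe_comp, hcomp]
    exact map_injective hinj
  exact fun z z' h => hφ (Subtype.ext h)

end Rewriting

section Counting

variable {H : Subgroup (FreeGroup α)}

variable (H) in
def treeEdges : Set (Quotient (rightRel H) × (α × Bool)) := {p | schreierGen H p.1 p.2 = 1}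

variable (H) in
def cotreeEdges (m : ℕ) : Set (Quotient (rightRel H) × (α × Bool)) :=
  {p | p ∉ treeEdges H ∧ norm (schreierGen H p.1 p.2) = m}

variable (H) in
def ascendingEdges (n : ℕ) : Set (Quotient (rightRel H) × (α × Bool)) :=
  {p | cosetNorm H p.1 = n ∧ cosetNorm H (p.1 <• mk [p.2]) = n + 1}

theorem schreierGen_reverseEdge (p : Quotient (rightRel H) × (α × Bool)) :
    schreierGen H (reverseEdge p).1 (reverseEdge p).2 = (schreierGen H p.1 p.2)⁻¹ :=
  schreierGen_reverse p.1 p.2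

theorem reverseEdge_mem_treeEdges {p : Quotient (rightRel H) × (α × Bool)} :
    reverseEdge p ∈ treeEdges H ↔ p ∈ treeEdges H := by
  simp only [treeEdges, Set.mem_ofPred_eq, schreierGen_reverseEdge, inv_eq_one]

theorem mem_preimage_reverseEdge_ascendingEdges {p : Quotient (rightRel H) × (α × Bool)}
    {n : ℕ} : p ∈ reverseEdge ⁻¹' ascendingEdges H n ↔
      cosetNorm H p.1 = n + 1 ∧ cosetNorm H (p.1 <• mk [p.2]) = n := by
  simp only [Set.mem_preimage, ascendingEdges, Set.mem_ofPred_eq, reverseEdge,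
    op_smul_mk_singleton_op_smul_mk_singleton, and_comm]

theorem mem_schreierBasis_union_inv_iff {g : FreeGroup α} :
    g ∈ schreierBasis H ∪ (schreierBasis H)⁻¹ ↔
      ∃ p ∉ treeEdges H, schreierGen H p.1 p.2 = g := by
  constructor
  · rintro (⟨hg, c, i, rfl⟩ | ⟨hg, c, i, hci⟩)
    · exact ⟨(c, (i, true)), hg, rfl⟩
    · refine ⟨reverseEdge (c, (i, true)), fun h => hg ?_, ?_⟩
      · rw [← hci]
        exact reverseEdge_mem_treeEdges.1 h
      · rw [schreierGen_reverseEdge, hci, inv_inv]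
  · rintro ⟨⟨c, i, _ | _⟩, hp, rfl⟩
    · have hq := schreierGen_reverseEdge (H := H) (c, (i, false))
      exact Or.inr ⟨fun h => hp (inv_eq_one.1 h), _, i, hq⟩
    · exact Or.inl ⟨hp, c, i, rfl⟩

theorem setOf_mem_schreierBasis_union_inv_norm_eq (m : ℕ) :
    {g ∈ schreierBasis H ∪ (schreierBasis H)⁻¹ | norm g = m} =
      (fun p => schreierGen H p.1 p.2) '' cotreeEdges H m := by
  ext g
  simp only [Set.mem_ofPred_eq, mem_schreierBasis_union_inv_iff, Set.mem_image, cotreeEdges]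
  constructor
  · rintro ⟨⟨p, hp, rfl⟩, rfl⟩
    exact ⟨p, ⟨hp, rfl⟩, rfl⟩
  · rintro ⟨p, ⟨hp, rfl⟩, rfl⟩
    exact ⟨⟨p, hp, rfl⟩, rfl⟩

theorem ncard_setOf_mem_schreierBasis_union_inv_norm_eq (m : ℕ) :
    {g ∈ schreierBasis H ∪ (schreierBasis H)⁻¹ | norm g = m}.ncard =
      (cotreeEdges H m).ncard := by
  rw [setOf_mem_schreierBasis_union_inv_norm_eq]
  exact (schreierGen_injOn.mono fun _ hp => hp.1).ncard_image

theorem bijOn_ascendingEdges_inter_treeEdges (n : ℕ) :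
    Set.BijOn (fun p => p.1 <• mk [p.2]) (ascendingEdges H n ∩ treeEdges H)
      {c | cosetNorm H c = n + 1} := by
  refine ⟨fun p hp => hp.1.2, fun p hp q hq hpq => ?_, fun c hc => ?_⟩
  · have hword (p) (hp : p ∈ ascendingEdges H n ∩ treeEdges H) :
        (schreierRep H (p.1 <• mk [p.2])).toWord = (schreierRep H p.1).toWord ++ [p.2] := by
      rw [← schreierGen_eq_one_iff.1 hp.2]
      refine toWord_mul_mk_singleton ?_
      rw [schreierGen_eq_one_iff.1 hp.2, norm_schreierRep, norm_schreierRep, hp.1.1, hp.1.2]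
    simp only at hpq
    have h := (hword p hp).symm.trans (hpq ▸ hword q hq)
    obtain ⟨-, ha⟩ := List.append_inj' h rfl
    have ha := List.singleton_inj.1 ha
    refine Prod.ext ?_ ha
    rw [← op_smul_mk_singleton_op_smul_mk_singleton p.1 p.2,
      ← op_smul_mk_singleton_op_smul_mk_singleton q.1 q.2, hpq, ha]
  · replace hc : cosetNorm H c = n + 1 := hc
    have hc0 : cosetNorm H c ≠ 0 := by omega
    refine ⟨(c <• (mk [parentLetter c hc0])⁻¹, parentLetter c hc0), ⟨⟨?_, ?_⟩, ?_⟩, ?_⟩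
    · have := cosetNorm_parent_add_one hc0
      exact (by omega : cosetNorm H (c <• (mk [parentLetter c hc0])⁻¹) = n)
    · rwa [op_smul_inv_op_smul]
    · exact schreierGen_parent_eq_one hc0
    · exact op_smul_inv_op_smul c _

theorem ncard_setOf_cosetNorm_fst_eq (n : ℕ) :
    {p : Quotient (rightRel H) × (α × Bool) | cosetNorm H p.1 = n}.ncard =
      {c : Quotient (rightRel H) | cosetNorm H c = n}.ncard * (2 * Nat.card α) := by
  have : {p : Quotient (rightRel H) × (α × Bool) | cosetNorm H p.1 = n} =
      {c | cosetNorm H c = n} ×ˢ Set.univ := Set.ext fun _ => by simp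
  rw [this, Set.ncard_prod, Set.ncard_univ, Nat.card_prod, Nat.card_eq_fintype_card (α := Bool),
    Fintype.card_bool, mul_comm 2]

section Finite

variable [Finite α]

theorem finite_setOf_cosetNorm_fst_le (m : ℕ) :
    {p : Quotient (rightRel H) × (α × Bool) | cosetNorm H p.1 ≤ m}.Finite :=
  ((finite_setOf_cosetNorm_le m).prod Set.finite_univ).subset fun _ hp => ⟨hp, trivial⟩

theorem finite_ascendingEdges (n : ℕ) : (ascendingEdges H n).Finite :=
  (finite_setOf_cosetNorm_fst_le n).subset fun _ hp => hp.1.le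

theorem finite_cotreeEdges (m : ℕ) : (cotreeEdges H m).Finite :=
  (finite_setOf_cosetNorm_fst_le m).subset fun _ hp => by
    have := norm_schreierGen hp.1
    have := hp.2
    rw [Set.mem_ofPred_eq]
    omega

end Finite

namespace IsEvenSubgroup

variable (hH : IsEvenSubgroup H)
include hH

theorem cotreeEdges_eq_empty_of_odd {m : ℕ} (hm : Odd m) : cotreeEdges H m = ∅ :=
  Set.eq_empty_of_forall_notMem fun p hp => by
    have := norm_schreierGen hp.1
    have := hH.cosetNorm_op_smul_mk_singleton p.1 p.2
    obtain ⟨k, hk⟩ := hm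
    rw [hp.2] at *
    omega

theorem cotreeEdges_two_mul_add_two (n : ℕ) :
    cotreeEdges H (2 * n + 2) =
      (ascendingEdges H n \ treeEdges H) ∪ reverseEdge ⁻¹' (ascendingEdges H n \ treeEdges H) := by
  ext p
  rw [Set.mem_union, Set.mem_preimage, Set.mem_sdiff, Set.mem_sdiff, ← Set.mem_preimage,
    mem_preimage_reverseEdge_ascendingEdges, reverseEdge_mem_treeEdges]
  simp only [cotreeEdges, ascendingEdges, Set.mem_ofPred_eq]
  by_cases hp : p ∈ treeEdges H
  · simp [hp]
  · have := hH.cosetNorm_op_smul_mk_singleton p.1 p.2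
    simp only [hp, not_false_eq_true, true_and, and_true, norm_schreierGen hp]
    omega

theorem ncard_ascendingEdges_zero : (ascendingEdges H 0).ncard = 2 * Nat.card α := by
  have : ascendingEdges H 0 = {p | cosetNorm H p.1 = 0} := by
    ext p
    have := hH.cosetNorm_op_smul_mk_singleton p.1 p.2
    simp only [ascendingEdges, Set.mem_ofPred_eq]
    omega
  rw [this, ncard_setOf_cosetNorm_fst_eq, setOf_cosetNorm_eq_zero, Set.ncard_singleton, one_mul]

variable [Finite α]

theorem ncard_cotreeEdges_two_mul_add_two (n : ℕ) :
    (cotreeEdges H (2 * n + 2)).ncard +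
        2 * {c : Quotient (rightRel H) | cosetNorm H c = n + 1}.ncard =
      2 * (ascendingEdges H n).ncard := by
  have hdisj : Disjoint (ascendingEdges H n \ treeEdges H)
      (reverseEdge ⁻¹' (ascendingEdges H n \ treeEdges H)) := by
    refine Set.disjoint_left.2 fun p hp hp' => ?_
    rw [Set.mem_preimage, Set.mem_sdiff, ← Set.mem_preimage,
      mem_preimage_reverseEdge_ascendingEdges] at hp'
    have := hp.1.1
    omega
  have hfin := (finite_ascendingEdges (H := H) n).sdiff (t := treeEdges H)
  rw [hH.cotreeEdges_two_mul_add_two, Set.ncard_union_eq hdisj hfin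
    (hfin.preimage reverseEdge_involutive.injective.injOn), ncard_preimage_reverseEdge,
    ← (bijOn_ascendingEdges_inter_treeEdges n).ncard_eq,
    ← Set.ncard_inter_add_ncard_sdiff_eq_ncard _ (treeEdges H) (finite_ascendingEdges n)]
  ring

theorem ncard_ascendingEdges_succ_add (n : ℕ) :
    (ascendingEdges H (n + 1)).ncard + (ascendingEdges H n).ncard =
      {c : Quotient (rightRel H) | cosetNorm H c = n + 1}.ncard * (2 * Nat.card α) := by
  have hsplit : {p : Quotient (rightRel H) × (α × Bool) | cosetNorm H p.1 = n + 1} =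
      ascendingEdges H (n + 1) ∪ reverseEdge ⁻¹' ascendingEdges H n := by
    ext p
    rw [Set.mem_union, mem_preimage_reverseEdge_ascendingEdges]
    have := hH.cosetNorm_op_smul_mk_singleton p.1 p.2
    simp only [ascendingEdges, Set.mem_ofPred_eq]
    omega
  have hdisj : Disjoint (ascendingEdges H (n + 1)) (reverseEdge ⁻¹' ascendingEdges H n) :=
    Set.disjoint_left.2 fun p hp hp' => by
      have := (mem_preimage_reverseEdge_ascendingEdges.1 hp').2
      have := hp.2
      omega
  rw [← ncard_setOf_cosetNorm_fst_eq, hsplit, Set.ncard_union_eq hdisj (finite_ascendingEdges _)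
    ((finite_ascendingEdges n).preimage reverseEdge_involutive.injective.injOn),
    ncard_preimage_reverseEdge]

end IsEvenSubgroup

end Counting

end FreeGroup

theorem schreier_even_subgroup_general (r : ℕ) (H : Subgroup (FreeGroup (Fin r)))
    (heven : ∀ h ∈ H, Even (FreeGroup.norm h)) :
    (∀ n : ℕ, {c : Quotient (QuotientGroup.rightRel H) | cosetLen H c = n}.Finite) ∧
    ∃ S : Set (FreeGroup (Fin r)),
      Function.Injective (FreeGroup.lift (fun s : S => (s : FreeGroup (Fin r)))) ∧
      MonoidHom.range (FreeGroup.lift (fun s : S => (s : FreeGroup (Fin r)))) = H ∧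
      (∀ m : ℕ, {g ∈ S ∪ S⁻¹ | FreeGroup.norm g = m}.Finite) ∧
      (∀ m : ℕ, Odd m → {g ∈ S ∪ S⁻¹ | FreeGroup.norm g = m}.ncard = 0) ∧
      (({g ∈ S ∪ S⁻¹ | FreeGroup.norm g = 2}.ncard : ℤ)
        = 4 * (r : ℤ)
          - 2 * ({c : Quotient (QuotientGroup.rightRel H) | cosetLen H c = 1}.ncard : ℤ)) ∧
      (∀ n : ℕ, 1 ≤ n →
        (({g ∈ S ∪ S⁻¹ | FreeGroup.norm g = 2 * n}.ncard : ℤ)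
          + ({g ∈ S ∪ S⁻¹ | FreeGroup.norm g = 2 * n + 2}.ncard : ℤ))
          = 2 * ((2 * (r : ℤ) - 1)
                  * ({c : Quotient (QuotientGroup.rightRel H) | cosetLen H c = n}.ncard : ℤ)
                - ({c : Quotient (QuotientGroup.rightRel H) | cosetLen H c = n + 1}.ncard : ℤ))) := by
  have hH : FreeGroup.IsEvenSubgroup H := heven
  have hA₀ := hH.ncard_ascendingEdges_zero
  have hA := hH.ncard_ascendingEdges_succ_add
  have hN := hH.ncard_cotreeEdges_two_mul_add_two
  rw [Nat.card_eq_fintype_card, Fintype.card_fin] at hA₀ hA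
  rw [show cosetLen H = FreeGroup.cosetNorm H from rfl]
  refine ⟨fun n => (FreeGroup.finite_setOf_cosetNorm_le n).subset fun _ hc => hc.le,
    FreeGroup.schreierBasis H, FreeGroup.injective_lift_schreierBasis,
    FreeGroup.range_lift_schreierBasis, fun m => ?_, fun m hm => ?_, ?_, fun n hn => ?_⟩
  · rw [FreeGroup.setOf_mem_schreierBasis_union_inv_norm_eq]
    exact (FreeGroup.finite_cotreeEdges m).image _
  · rw [FreeGroup.ncard_setOf_mem_schreierBasis_union_inv_norm_eq,
      hH.cotreeEdges_eq_empty_of_odd hm, Set.ncard_empty]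
  · rw [FreeGroup.ncard_setOf_mem_schreierBasis_union_inv_norm_eq]
    have := hN 0
    simp only [mul_zero, zero_add] at this
    omega
  · simp only [FreeGroup.ncard_setOf_mem_schreierBasis_union_inv_norm_eq]
    obtain ⟨k, rfl⟩ := Nat.exists_eq_add_of_le' hn
    have h₁ := congrArg (Nat.cast : ℕ → ℤ) (hN k)
    have h₂ := congrArg (Nat.cast : ℕ → ℤ) (hN (k + 1))
    have h₃ := congrArg (Nat.cast : ℕ → ℤ) (hA k)
    push_cast at h₁ h₂ h₃
    linear_combination h₁ + h₂ + 2 * h₃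

/-- Schreier formula for an *even* subgroup `H` of a free group of rank `r ≥ 1`
(every element of `H` has even reduced length): there is a symmetric free basis
`B = S ∪ S⁻¹` of `H` with `b(m) = 0` for odd `m`, `b(2) = 4r − 2 v(1)`, and
`b(2n) + b(2n+2) = 2((2r−1) v(n) − v(n+1))` for `n ≥ 1`; equivalently, with
`d(n) = b(2n)/2`, one has `Ĥ(B,t) = (2rt/(t+1) − 1)·H(F/H,t) + 1`, so the Hilbert
series of the free generators is recovered from that of `F/H`. -/
theorem schreier_even_subgroup (r : ℕ) (hr : 1 ≤ r) (H : Subgroup (FreeGroup (Fin r)))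
    (heven : ∀ h ∈ H, Even (FreeGroup.norm h)) :
    (∀ n : ℕ, {c : Quotient (QuotientGroup.rightRel H) | cosetLen H c = n}.Finite) ∧
    ∃ S : Set (FreeGroup (Fin r)),
      Function.Injective (FreeGroup.lift (fun s : S => (s : FreeGroup (Fin r)))) ∧
      MonoidHom.range (FreeGroup.lift (fun s : S => (s : FreeGroup (Fin r)))) = H ∧
      (∀ m : ℕ, {g ∈ S ∪ S⁻¹ | FreeGroup.norm g = m}.Finite) ∧
      (∀ m : ℕ, Odd m → {g ∈ S ∪ S⁻¹ | FreeGroup.norm g = m}.ncard = 0) ∧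
      (({g ∈ S ∪ S⁻¹ | FreeGroup.norm g = 2}.ncard : ℤ)
        = 4 * (r : ℤ)
          - 2 * ({c : Quotient (QuotientGroup.rightRel H) | cosetLen H c = 1}.ncard : ℤ)) ∧
      (∀ n : ℕ, 1 ≤ n →
        (({g ∈ S ∪ S⁻¹ | FreeGroup.norm g = 2 * n}.ncard : ℤ)
          + ({g ∈ S ∪ S⁻¹ | FreeGroup.norm g = 2 * n + 2}.ncard : ℤ))
          = 2 * ((2 * (r : ℤ) - 1)
                  * ({c : Quotient (QuotientGroup.rightRel H) | cosetLen H c = n}.ncard : ℤ)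
                - ({c : Quotient (QuotientGroup.rightRel H) | cosetLen H c = n + 1}.ncard : ℤ))) :=
  schreier_even_subgroup_general r H heven
end
end

section
/- Let Φ be a field and R = Φ⟨x_1,…,x_r⟩ the free associative algebra of finite rank r ≥ 1 over Φ. Let M be a finitely presented right R-module, i.e. M = F/N where F is a free right R-module of finite rank and N is a finitely generated submodule. Then M has a submodule L of finite codimension (dim_Φ(M/L) < ∞) which is a free R-module. -/
/-!
Identify `F = Fin p → Rᵐᵒᵖ` with the `Φ`-space on the monomials `(i, w)`. Left multiplication by
a word `v` sends `(i, w)` to `(i, v ++ w)`, and `rank` is a well-order on monomials compatible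
with it, so leading monomials and division with remainder work as for Gröbner bases. Choose
generators `G` of `N` that are interreduced: no leading monomial of one of them is obtained by
prepending a word to that of another. Then the leading monomials of `N` are those of the
products `v • g`, so if `d` bounds the lengths of the leading monomials of `G`, a standard
monomial (one that is not a leading monomial of `N`) of length at least `d` stays standard after
prepending. Hence the standard monomials of length exactly `d` map to a free basis of a
submodule `L` of `F/N`, and the finitely many standard monomials of length `< d` span the
quotient by `L`.
-/

noncomputable section

open MulOpposite

theorem Submodule.span_insert_sub_eq {R M : Type*} [Ring R] [AddCommGroup M] [Module R M]
    {s : Set M} {x y : M} (hy : y ∈ span R s) :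
    span R (insert (x - y) s) = span R (insert x s) := by
  have hs {z : M} : s ⊆ span R (insert z s) := (Set.subset_insert _ _).trans subset_span
  have hy' {z : M} : y ∈ span R (insert z s) := span_mono (Set.subset_insert _ _) hy
  apply le_antisymm <;> rw [span_le, Set.insert_subset_iff] <;> refine ⟨?_, hs⟩
  · exact sub_mem (subset_span (Set.mem_insert _ _)) hy'
  · simpa only [sub_add_cancel, SetLike.mem_coe] using
      add_mem (subset_span (Set.mem_insert (x - y) s)) hy'

theorem Finset.sum_insert_le_add {ι : Type*} [DecidableEq ι] (f : ι → ℕ) (a : ι)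
    (s : Finset ι) : ∑ x ∈ insert a s, f x ≤ f a + ∑ x ∈ s, f x := by
  by_cases ha : a ∈ s
  · rw [Finset.insert_eq_of_mem ha]
    exact Nat.le_add_left _ _
  · rw [Finset.sum_insert ha]

theorem LinearIndependent.of_smul_basis {ι κ R S A : Type*} [CommRing R] [Ring S]
    [Algebra R S] [AddCommGroup A] [Module S A] [Module R A] [IsScalarTower R S A]
    (b : Module.Basis ι R S) {c : κ → A}
    (h : LinearIndependent R fun q : ι × κ => b q.1 • c q.2) : LinearIndependent S c := by
  let B := b.smulTower (Finsupp.basisSingleOne : Module.Basis κ S (κ →₀ S))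
  have hB : (Finsupp.linearCombination S c).restrictScalars R ∘ B = fun q => b q.1 • c q.2 := by
    ext q
    simp [B]
  rw [linearIndependent_iff_injective_finsuppLinearCombination]
  exact LinearMap.injective_of_linearIndependent
    (f := (Finsupp.linearCombination S c).restrictScalars R) B.span_eq (hB ▸ h)

namespace WordAlgebra

open Submodule
open scoped Pointwise

variable {r p : ℕ} {Φ T : Type*} [Field Φ] [Ring T] [Algebra Φ T]

def wordCode : List (Fin r) → ℕ
  | [] => 0
  | a :: w => 1 + a + r * wordCode w

theorem wordCode_injective : Function.Injective (wordCode (r := r)) := by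
  intro w
  induction w with
  | nil =>
    rintro (_ | ⟨b, v⟩) h
    · rfl
    · simp only [wordCode] at h; omega
  | cons a w ih =>
    rintro (_ | ⟨b, v⟩) h
    · simp only [wordCode] at h; omega
    · have hr : 0 < r := a.pos
      have h' : (a : ℕ) + r * wordCode w = b + r * wordCode v := by simp only [wordCode] at h; omega
      obtain ⟨hdiv, hmod⟩ := (Nat.div_mod_unique hr).mpr ⟨h', a.isLt⟩
      obtain ⟨hdiv', hmod'⟩ := (Nat.div_mod_unique hr).mpr ⟨rfl, b.isLt⟩
      rw [Fin.ext (hmod.symm.trans hmod'), ih (hdiv.symm.trans hdiv')]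

theorem wordCode_append_lt_append (v : List (Fin r)) {w w' : List (Fin r)}
    (h : wordCode w < wordCode w') : wordCode (v ++ w) < wordCode (v ++ w') := by
  induction v with
  | nil => exact h
  | cons a v ih =>
    simpa [wordCode] using Nat.mul_lt_mul_of_pos_left ih a.pos

def prepend (v : List (Fin r)) (m : Fin p × List (Fin r)) : Fin p × List (Fin r) :=
  (m.1, v ++ m.2)

theorem prepend_injective (v : List (Fin r)) : Function.Injective (prepend (p := p) v) := by
  rintro ⟨i, w⟩ ⟨j, w'⟩ h
  simpa [prepend] using h

theorem exists_eq_prepend_of_prepend_eq {v v' : List (Fin r)} {m m' : Fin p × List (Fin r)}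
    (h : prepend v m = prepend v' m') (hlen : m'.2.length ≤ m.2.length) :
    ∃ u, m = prepend u m' := by
  obtain ⟨h₁, h₂⟩ := Prod.mk.inj h
  obtain ⟨u, hu⟩ := List.suffix_of_suffix_length_le (h₂ ▸ List.suffix_append v' m'.2)
    (List.suffix_append v m.2) hlen
  exact ⟨u, Prod.ext h₁ hu.symm⟩

theorem exists_eq_prepend_of_le_length {d : ℕ} {m : Fin p × List (Fin r)}
    (h : d ≤ m.2.length) : ∃ v m', m'.2.length = d ∧ m = prepend v m' :=
  ⟨m.2.take (m.2.length - d), (m.1, m.2.drop (m.2.length - d)), by simp; omega,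
    by simp [prepend]⟩

def rank (m : Fin p × List (Fin r)) : ℕ := m.1 + p * wordCode m.2

theorem rank_lt_rank_iff {m m' : Fin p × List (Fin r)} :
    rank m < rank m' ↔
      wordCode m.2 < wordCode m'.2 ∨ wordCode m.2 = wordCode m'.2 ∧ m.1 < m'.1 := by
  obtain ⟨⟨i, hi⟩, w⟩ := m
  obtain ⟨⟨j, hj⟩, w'⟩ := m'
  simp only [rank, Fin.lt_def]
  rcases lt_trichotomy (wordCode w) (wordCode w') with h | h | h
  · simp only [h, true_or, iff_true]
    nlinarith
  · simp [h]
  · simp only [h.not_gt, h.ne', false_or, false_and, iff_false, not_lt]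
    nlinarith

theorem rank_injective : Function.Injective (rank (p := p) (r := r)) := by
  intro m m' h
  have h₁ := (rank_lt_rank_iff (m := m) (m' := m')).not.mp h.not_lt
  have h₂ := (rank_lt_rank_iff (m := m') (m' := m)).not.mp h.not_gt
  have hw : wordCode m.2 = wordCode m'.2 := by omega
  exact Prod.ext (Fin.ext (by omega)) (wordCode_injective hw)

theorem rank_prepend_lt_rank_prepend (v : List (Fin r)) {m m' : Fin p × List (Fin r)}
    (h : rank m < rank m') : rank (prepend v m) < rank (prepend v m') := by
  rw [rank_lt_rank_iff] at h ⊢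
  rcases h with h | ⟨h, hi⟩
  · exact .inl (wordCode_append_lt_append v h)
  · exact .inr ⟨by rw [prepend, prepend, wordCode_injective h], hi⟩

def IsWordMultiplicative {R A α : Type*} [Semiring R] [Semiring A] [Module R A]
    (b : Module.Basis (List α) R A) : Prop :=
  ∀ v w, b v * b w = b (v ++ w)

section MonomialBasis

variable (bb : Module.Basis (List (Fin r)) Φ T)

def monoBasis : Module.Basis (Fin p × List (Fin r)) Φ (Fin p → T) :=
  (Pi.basis fun _ : Fin p => bb).reindex (Equiv.sigmaEquivProd (Fin p) (List (Fin r)))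

theorem monoBasis_apply (m : Fin p × List (Fin r)) :
    monoBasis bb m = Pi.single m.1 (bb m.2) := by
  rw [monoBasis, Module.Basis.reindex_apply]
  exact Pi.basis_apply _ _

def spanBelow (n : ℕ) : Submodule Φ (Fin p → T) :=
  span Φ (monoBasis bb '' {m | rank m < n})

variable {bb}

theorem mem_spanBelow_iff {n : ℕ} {f : Fin p → T} :
    f ∈ spanBelow bb n ↔ ∀ m ∈ ((monoBasis bb).repr f).support, rank m < n :=
  (monoBasis bb).mem_span_image

theorem spanBelow_mono {n n' : ℕ} (h : n ≤ n') : spanBelow (p := p) bb n ≤ spanBelow bb n' :=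
  span_mono (Set.image_mono fun _ hm => lt_of_lt_of_le hm h)

theorem smul_monoBasis (hbb : IsWordMultiplicative bb) (v : List (Fin r))
    (m : Fin p × List (Fin r)) : bb v • monoBasis bb m = monoBasis bb (prepend v m) := by
  rw [monoBasis_apply, monoBasis_apply, prepend, ← Pi.single_smul, smul_eq_mul, hbb]

theorem monoBasis_repr_smul (hbb : IsWordMultiplicative bb) (v : List (Fin r))
    (f : Fin p → T) :
    (monoBasis bb).repr (bb v • f) = ((monoBasis bb).repr f).mapDomain (prepend v) := by
  let smulWord : (Fin p → T) →ₗ[Φ] (Fin p → T) :=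
    { toFun := (bb v • ·), map_add' := smul_add _, map_smul' := fun c x => smul_comm _ c x }
  have key : (monoBasis bb).repr.toLinearMap ∘ₗ smulWord
      = Finsupp.lmapDomain Φ Φ (prepend v) ∘ₗ (monoBasis bb).repr.toLinearMap :=
    (monoBasis bb).ext fun m => by simp [smulWord, smul_monoBasis hbb]
  exact LinearMap.congr_fun key f

theorem support_monoBasis_repr_smul (hbb : IsWordMultiplicative bb) (v : List (Fin r))
    (f : Fin p → T) [DecidableEq (Fin p × List (Fin r))] :
    ((monoBasis bb).repr (bb v • f)).support
      = ((monoBasis bb).repr f).support.image (prepend v) := by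
  rw [monoBasis_repr_smul hbb, Finsupp.mapDomain_support_of_injective (prepend_injective v)]

theorem word_smul_ne_zero (hbb : IsWordMultiplicative bb) {f : Fin p → T} (hf : f ≠ 0)
    (v : List (Fin r)) : bb v • f ≠ 0 := by
  classical
  intro h
  have hsupp := support_monoBasis_repr_smul hbb v f
  rw [h, map_zero, Finsupp.support_zero, eq_comm, Finset.image_eq_empty,
    Finsupp.support_eq_empty, LinearEquiv.map_eq_zero_iff] at hsupp
  exact hf hsupp

end MonomialBasis

section LeadingMonomial

variable (bb : Module.Basis (List (Fin r)) Φ T) [NeZero p]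

/-- The value `(0, [])` at `f = 0` is junk. -/
def leadingMonomial (f : Fin p → T) : Fin p × List (Fin r) :=
  if h : ((monoBasis bb).repr f).support.Nonempty then
    (((monoBasis bb).repr f).support.exists_max_image rank h).choose
  else (0, [])

open Classical in
def height (f : Fin p → T) : ℕ :=
  if f = 0 then 0 else rank (leadingMonomial bb f) + 1

variable {bb}

theorem leadingMonomial_mem_support {f : Fin p → T} (hf : f ≠ 0) :
    leadingMonomial bb f ∈ ((monoBasis bb).repr f).support := by
  have h : ((monoBasis bb).repr f).support.Nonempty := by simpa using hf
  rw [leadingMonomial, dif_pos h]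
  exact (Finset.exists_max_image _ rank h).choose_spec.1

theorem rank_le_rank_leadingMonomial {f : Fin p → T} {m : Fin p × List (Fin r)}
    (hm : m ∈ ((monoBasis bb).repr f).support) : rank m ≤ rank (leadingMonomial bb f) := by
  have h : ((monoBasis bb).repr f).support.Nonempty := ⟨m, hm⟩
  rw [leadingMonomial, dif_pos h]
  exact (Finset.exists_max_image _ rank h).choose_spec.2 m hm

theorem leadingMonomial_eq_of_forall_rank_le {f : Fin p → T} {m : Fin p × List (Fin r)}
    (hm : m ∈ ((monoBasis bb).repr f).support)
    (hmax : ∀ m' ∈ ((monoBasis bb).repr f).support, rank m' ≤ rank m) :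
    leadingMonomial bb f = m :=
  rank_injective <| le_antisymm (hmax _ (leadingMonomial_mem_support (by rintro rfl; simp at hm)))
    (rank_le_rank_leadingMonomial hm)

theorem mem_spanBelow_rank_succ (f : Fin p → T) :
    f ∈ spanBelow bb (rank (leadingMonomial bb f) + 1) :=
  mem_spanBelow_iff.mpr fun _ hm => Nat.lt_succ_of_le (rank_le_rank_leadingMonomial hm)

theorem rank_leadingMonomial_lt {n : ℕ} {f : Fin p → T} (hf : f ≠ 0)
    (h : f ∈ spanBelow bb n) : rank (leadingMonomial bb f) < n :=
  mem_spanBelow_iff.mp h _ (leadingMonomial_mem_support hf)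

theorem height_lt_height {f g : Fin p → T} (hg : g ≠ 0)
    (hf : f ∈ spanBelow bb (rank (leadingMonomial bb g))) : height bb f < height bb g := by
  unfold height
  rw [if_neg hg]
  split_ifs with hf0
  · exact Nat.succ_pos _
  · exact Nat.succ_lt_succ (rank_leadingMonomial_lt hf0 hf)

theorem exists_sub_smul_mem_spanBelow {f g : Fin p → T} (hg : g ≠ 0)
    (h : leadingMonomial bb g = leadingMonomial bb f) :
    ∃ c : Φ, f - c • g ∈ spanBelow bb (rank (leadingMonomial bb f)) := by
  set m := leadingMonomial bb f
  set c := (monoBasis bb).repr f m / (monoBasis bb).repr g m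
  have hgm : (monoBasis bb).repr g m ≠ 0 := h ▸ Finsupp.mem_support_iff.mp
    (leadingMonomial_mem_support hg)
  refine ⟨c, mem_spanBelow_iff.mpr fun m' hm' => ?_⟩
  have hcoeff : (monoBasis bb).repr f m' - c * (monoBasis bb).repr g m' ≠ 0 := by simpa using hm'
  have hne : m' ≠ m := by
    rintro rfl
    exact hcoeff (by rw [div_mul_cancel₀ _ hgm, sub_self])
  refine lt_of_le_of_ne ?_ (rank_injective.ne hne)
  by_cases hfm' : (monoBasis bb).repr f m' = 0
  · have hgm' : (monoBasis bb).repr g m' ≠ 0 := by rintro hgm'; simp [hfm', hgm'] at hcoeff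
    exact h ▸ rank_le_rank_leadingMonomial (Finsupp.mem_support_iff.mpr hgm')
  · exact rank_le_rank_leadingMonomial (Finsupp.mem_support_iff.mpr hfm')

theorem leadingMonomial_eq_of_sub_mem_spanBelow {f g : Fin p → T} {m : Fin p × List (Fin r)}
    (hgm : (monoBasis bb).repr g m ≠ 0) (hg : g ∈ spanBelow bb (rank m + 1))
    (hfg : f - g ∈ spanBelow bb (rank m)) : leadingMonomial bb f = m := by
  have hfg' := mem_spanBelow_iff.mp hfg
  have hg' := mem_spanBelow_iff.mp hg
  have hf : f = g + (f - g) := by abel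
  have hcoeff (m' : Fin p × List (Fin r)) :
      (monoBasis bb).repr f m' = (monoBasis bb).repr g m' + (monoBasis bb).repr (f - g) m' := by
    rw [← Finsupp.add_apply, ← map_add, ← hf]
  apply leadingMonomial_eq_of_forall_rank_le
  · have : (monoBasis bb).repr (f - g) m = 0 :=
      Finsupp.notMem_support_iff.mp fun hm => (hfg' m hm).false
    rwa [Finsupp.mem_support_iff, hcoeff, this, add_zero]
  · intro m' hm'
    rw [Finsupp.mem_support_iff, hcoeff] at hm'
    by_cases hgm' : (monoBasis bb).repr g m' = 0
    · rw [hgm', zero_add] at hm'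
      exact (hfg' m' (Finsupp.mem_support_iff.mpr hm')).le
    · exact Nat.le_of_lt_succ (hg' m' (Finsupp.mem_support_iff.mpr hgm'))

theorem leadingMonomial_word_smul (hbb : IsWordMultiplicative bb) {f : Fin p → T} (hf : f ≠ 0)
    (v : List (Fin r)) : leadingMonomial bb (bb v • f) = prepend v (leadingMonomial bb f) := by
  classical
  apply leadingMonomial_eq_of_forall_rank_le
  · rw [support_monoBasis_repr_smul hbb]
    exact Finset.mem_image_of_mem _ (leadingMonomial_mem_support hf)
  · intro m' hm'
    rw [support_monoBasis_repr_smul hbb] at hm'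
    obtain ⟨m, hm, rfl⟩ := Finset.mem_image.mp hm'
    rcases (rank_le_rank_leadingMonomial hm).lt_or_eq with hlt | heq
    · exact (rank_prepend_lt_rank_prepend v hlt).le
    · rw [rank_injective heq]

end LeadingMonomial

section StandardMonomials

variable (bb : Module.Basis (List (Fin r)) Φ T) [NeZero p]

def leadingMonomials (s : Set (Fin p → T)) : Set (Fin p × List (Fin r)) :=
  leadingMonomial bb '' (s \ {0})

variable {bb}

theorem leadingMonomial_monoBasis (m : Fin p × List (Fin r)) :
    leadingMonomial bb (monoBasis bb m) = m := by
  refine leadingMonomial_eq_of_forall_rank_le (by simp) fun m' hm' => ?_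
  simp only [Module.Basis.repr_self, Finsupp.mem_support_iff] at hm'
  rw [Finsupp.single_apply_ne_zero.mp hm' |>.1]

theorem isCompl_span_monoBasis_compl_leadingMonomials (W : Submodule Φ (Fin p → T)) :
    IsCompl W (span Φ (monoBasis bb '' (leadingMonomials bb (W : Set (Fin p → T)))ᶜ)) := by
  set S := span Φ (monoBasis bb '' (leadingMonomials bb (W : Set (Fin p → T)))ᶜ)
  refine ⟨disjoint_def.mpr fun f hfW hfS => by_contra fun hf0 => ?_, codisjoint_iff.mpr ?_⟩
  · exact (monoBasis bb).mem_span_image.mp hfS (leadingMonomial_mem_support hf0)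
      ⟨f, ⟨hfW, hf0⟩, rfl⟩
  suffices h : ∀ n, spanBelow bb n ≤ W ⊔ S from
    eq_top_iff.mpr fun f _ => h _ (mem_spanBelow_rank_succ f)
  intro n
  induction n using Nat.strong_induction_on with
  | _ n ih =>
  intro f hf
  by_cases hf0 : f = 0
  · exact hf0 ▸ zero_mem _
  have hlt := rank_leadingMonomial_lt hf0 hf
  obtain ⟨g, hg, hg0, hgf⟩ : ∃ g ∈ W ⊔ S, g ≠ 0 ∧ leadingMonomial bb g = leadingMonomial bb f := by
    by_cases hΛ : leadingMonomial bb f ∈ leadingMonomials bb (W : Set (Fin p → T))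
    · obtain ⟨g, ⟨hgW, hg0⟩, hgf⟩ := hΛ
      exact ⟨g, mem_sup_left hgW, hg0, hgf⟩
    · exact ⟨_, mem_sup_right (subset_span ⟨_, hΛ, rfl⟩), (monoBasis bb).ne_zero _,
        leadingMonomial_monoBasis _⟩
  obtain ⟨c, hc⟩ := exists_sub_smul_mem_spanBelow hg0 hgf
  rw [← sub_add_cancel f (c • g)]
  exact add_mem (ih _ hlt hc) (smul_mem _ c hg)

theorem leadingMonomials_span_subset {S : Set (Fin p → T)} (hS0 : (0 : Fin p → T) ∉ S)
    (hS : S.InjOn (leadingMonomial bb)) :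
    leadingMonomials bb (span Φ S) ⊆ leadingMonomial bb '' S := by
  classical
  rintro _ ⟨f, ⟨hf, hf0 : f ≠ 0⟩, rfl⟩
  obtain ⟨c, hcS, rfl⟩ := mem_span_set.mp hf
  have hne : c.support.Nonempty := by
    rw [Finset.nonempty_iff_ne_empty]
    rintro hc
    simp [Finsupp.sum, hc] at hf0
  obtain ⟨x₀, hx₀, hmax⟩ := c.support.exists_max_image (fun x => rank (leadingMonomial bb x)) hne
  have hx₀0 : x₀ ≠ 0 := fun h => hS0 (h ▸ hcS hx₀)
  refine ⟨x₀, hcS hx₀, (leadingMonomial_eq_of_sub_mem_spanBelow (g := c x₀ • x₀) ?_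
    (smul_mem _ _ (mem_spanBelow_rank_succ x₀)) ?_).symm⟩
  · simpa using ⟨Finsupp.mem_support_iff.mp hx₀,
      Finsupp.mem_support_iff.mp (leadingMonomial_mem_support hx₀0)⟩
  rw [Finsupp.sum, ← Finset.sum_erase_eq_sub hx₀]
  refine sum_mem fun x hx => smul_mem _ _ (spanBelow_mono ?_ (mem_spanBelow_rank_succ x))
  obtain ⟨hxx₀, hx⟩ := Finset.mem_erase.mp hx
  refine lt_of_le_of_ne (hmax x hx) fun h => hxx₀ ?_
  exact hS (hcS hx) (hcS hx₀) (rank_injective h)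

theorem prepend_mem_leadingMonomials (hbb : IsWordMultiplicative bb) (N : Submodule T (Fin p → T))
    {m : Fin p × List (Fin r)} (hm : m ∈ leadingMonomials bb N) (v : List (Fin r)) :
    prepend v m ∈ leadingMonomials bb N := by
  obtain ⟨f, ⟨hf, hf0 : f ≠ 0⟩, rfl⟩ := hm
  exact ⟨bb v • f, ⟨N.smul_mem _ hf, word_smul_ne_zero hbb hf0 v⟩,
    leadingMonomial_word_smul hbb hf0 v⟩

end StandardMonomials

section Interreduction

variable (bb : Module.Basis (List (Fin r)) Φ T) [NeZero p]

def IsInterreduced (G : Finset (Fin p → T)) : Prop :=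
  0 ∉ G ∧ ∀ g ∈ G, ∀ g' ∈ G, ∀ v,
    leadingMonomial bb g' = prepend v (leadingMonomial bb g) → g = g'

variable {bb}

theorem exists_span_eq_sum_height_lt [DecidableEq (Fin p → T)] (hbb : IsWordMultiplicative bb)
    {G : Finset (Fin p → T)} {g g' : Fin p → T} (hg : g ∈ G) (hg' : g' ∈ G) (hg0 : g ≠ 0)
    (hg'0 : g' ≠ 0) (hne : g ≠ g') {v : List (Fin r)}
    (h : leadingMonomial bb g' = prepend v (leadingMonomial bb g)) :
    ∃ G' : Finset (Fin p → T), span T (G' : Set (Fin p → T)) = span T G ∧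
      ∑ x ∈ G', height bb x < ∑ x ∈ G, height bb x := by
  obtain ⟨c, hc⟩ := exists_sub_smul_mem_spanBelow (f := g') (word_smul_ne_zero hbb hg0 v)
    (by rw [leadingMonomial_word_smul hbb hg0, h])
  refine ⟨insert (g' - c • bb v • g) (G.erase g'), ?_, ?_⟩
  · have hcg : c • bb v • g ∈ span T ((G.erase g' : Finset _) : Set (Fin p → T)) :=
      smul_of_tower_mem _ c (smul_mem _ _ (subset_span (Finset.mem_erase.mpr ⟨hne, hg⟩)))
    rw [Finset.coe_insert, span_insert_sub_eq hcg, ← Finset.coe_insert, Finset.insert_erase hg']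
  · calc ∑ x ∈ insert (g' - c • bb v • g) (G.erase g'), height bb x
        ≤ height bb (g' - c • bb v • g) + ∑ x ∈ G.erase g', height bb x :=
          Finset.sum_insert_le_add _ _ _
      _ < height bb g' + ∑ x ∈ G.erase g', height bb x :=
          Nat.add_lt_add_right (height_lt_height hg'0 hc) _
      _ = ∑ x ∈ G, height bb x := Finset.add_sum_erase _ _ hg'

theorem exists_isInterreduced_span_eq (hbb : IsWordMultiplicative bb)
    (N : Submodule T (Fin p → T)) (hN : N.FG) :
    ∃ G : Finset (Fin p → T), IsInterreduced bb G ∧ span T (G : Set (Fin p → T)) = N := by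
  classical
  -- a generating set of minimal total height admits no reduction step
  obtain ⟨G, hGN : span T _ = N, hmin⟩ := (measure fun G : Finset (Fin p → T) =>
    ∑ x ∈ G, height bb x).wf.has_min {G | span T (G : Set (Fin p → T)) = N} hN
  refine ⟨G.erase 0, ⟨Finset.notMem_erase 0 G, fun g hg g' hg' v h => by_contra fun hne => ?_⟩,
    by rw [Finset.coe_erase, span_sdiff_singleton_zero, hGN]⟩
  obtain ⟨hg0, hg⟩ := Finset.mem_erase.mp hg
  obtain ⟨hg'0, hg'⟩ := Finset.mem_erase.mp hg'
  obtain ⟨G', hG'span, hG'lt⟩ := exists_span_eq_sum_height_lt hbb hg hg' hg0 hg'0 hne h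
  exact hmin G' (hG'span.trans hGN) hG'lt

theorem IsInterreduced.ne_zero {G : Finset (Fin p → T)} (hG : IsInterreduced bb G)
    {g : Fin p → T} (hg : g ∈ G) : g ≠ 0 :=
  fun h => hG.1 (h ▸ hg)

theorem IsInterreduced.eq_of_prepend_eq {G : Finset (Fin p → T)} (hG : IsInterreduced bb G)
    {g g' : Fin p → T} (hg : g ∈ G) (hg' : g' ∈ G) {v v' : List (Fin r)}
    (h : prepend v (leadingMonomial bb g) = prepend v' (leadingMonomial bb g')) : g = g' := by
  rcases le_total (leadingMonomial bb g).2.length (leadingMonomial bb g').2.length with hle | hle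
  · obtain ⟨u, hu⟩ := exists_eq_prepend_of_prepend_eq h.symm hle
    exact hG.2 g hg g' hg' u hu
  · obtain ⟨u, hu⟩ := exists_eq_prepend_of_prepend_eq h hle
    exact (hG.2 g' hg' g hg u hu).symm

theorem IsInterreduced.leadingMonomials_span_subset (hbb : IsWordMultiplicative bb)
    {G : Finset (Fin p → T)} (hG : IsInterreduced bb G) :
    leadingMonomials bb (span T (G : Set (Fin p → T)))
      ⊆ {m | ∃ g ∈ G, ∃ v, m = prepend v (leadingMonomial bb g)} := by
  have hspan : (span T (G : Set (Fin p → T)) : Set (Fin p → T))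
      = span Φ (Set.range bb • (G : Set (Fin p → T))) := by
    rw [span_smul_of_span_eq_top bb.span_eq]
    rfl
  rw [hspan]
  refine (WordAlgebra.leadingMonomials_span_subset ?_ ?_).trans ?_
  · rintro ⟨_, ⟨v, rfl⟩, g, hg, h⟩
    exact word_smul_ne_zero hbb (hG.ne_zero hg) v h
  · rintro _ ⟨_, ⟨v, rfl⟩, g, hg, rfl⟩ _ ⟨_, ⟨v', rfl⟩, g', hg', rfl⟩ h
    simp only [leadingMonomial_word_smul hbb (hG.ne_zero hg),
      leadingMonomial_word_smul hbb (hG.ne_zero hg')] at h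
    obtain rfl := hG.eq_of_prepend_eq hg hg' h
    rw [List.append_cancel_right (congrArg Prod.snd h)]
  · rintro _ ⟨_, ⟨_, ⟨v, rfl⟩, g, hg, rfl⟩, rfl⟩
    exact ⟨g, hg, v, leadingMonomial_word_smul hbb (hG.ne_zero hg) v⟩

theorem IsInterreduced.prepend_notMem_leadingMonomials (hbb : IsWordMultiplicative bb)
    {G : Finset (Fin p → T)} (hG : IsInterreduced bb G) {m : Fin p × List (Fin r)}
    (hm : m ∉ leadingMonomials bb (span T (G : Set (Fin p → T))))
    (hlen : ∀ g ∈ G, (leadingMonomial bb g).2.length ≤ m.2.length) (v : List (Fin r)) :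
    prepend v m ∉ leadingMonomials bb (span T (G : Set (Fin p → T))) := by
  intro hv
  obtain ⟨g, hg, u, hu⟩ := hG.leadingMonomials_span_subset hbb hv
  obtain ⟨t, rfl⟩ := exists_eq_prepend_of_prepend_eq hu (hlen g hg)
  exact hm (prepend_mem_leadingMonomials hbb _ ⟨g, ⟨subset_span hg, hG.ne_zero hg⟩, rfl⟩ t)

end Interreduction

section FiniteCodimension

variable {bb : Module.Basis (List (Fin r)) Φ T}

theorem linearIndependent_monoBasis_of_length_eq (hbb : IsWordMultiplicative bb)
    {S : Set (Fin p × List (Fin r))} {d : ℕ} (hS : ∀ m ∈ S, m.2.length = d) :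
    LinearIndependent T fun m : S => monoBasis bb (m : Fin p × List (Fin r)) := by
  refine .of_smul_basis bb ?_
  simp_rw [smul_monoBasis hbb]
  refine (monoBasis bb).linearIndependent.comp _ ?_
  rintro ⟨v, m, hm⟩ ⟨v', m', hm'⟩ h
  obtain ⟨h₁, h₂⟩ := Prod.mk.inj h
  obtain ⟨rfl, h₃⟩ := List.append_inj' h₂ (by rw [hS m hm, hS m' hm'])
  obtain rfl : m = m' := Prod.ext h₁ h₃
  rfl

theorem linearIndependent_mkQ_monoBasis [NeZero p] (hbb : IsWordMultiplicative bb)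
    (N : Submodule T (Fin p → T)) {S : Set (Fin p × List (Fin r))} {d : ℕ}
    (hS : ∀ m ∈ S, m.2.length = d)
    (hSN : ∀ m ∈ S, ∀ v, prepend v m ∉ leadingMonomials bb (N : Set (Fin p → T))) :
    LinearIndependent T fun m : S => N.mkQ (monoBasis bb (m : Fin p × List (Fin r))) := by
  refine (linearIndependent_monoBasis_of_length_eq hbb hS).map ?_
  rw [ker_mkQ, disjoint_def]
  intro f hfS hfN
  have hfΦ : f ∈ span Φ (Set.range bb • Set.range fun m : S => monoBasis bb (m : _)) := by
    rw [span_smul_of_span_eq_top bb.span_eq]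
    exact hfS
  have hstd : f ∈ span Φ (monoBasis bb '' (leadingMonomials bb (N : Set (Fin p → T)))ᶜ) := by
    refine span_le.mpr ?_ hfΦ
    rintro _ ⟨_, ⟨v, rfl⟩, _, ⟨⟨m, hm⟩, rfl⟩, rfl⟩
    exact subset_span ⟨_, hSN m hm v, (smul_monoBasis hbb v m).symm⟩
  exact disjoint_def.mp
    (isCompl_span_monoBasis_compl_leadingMonomials (N.restrictScalars Φ)).disjoint f hfN hstd

theorem finite_quotient_of_monoBasis_mem [NeZero p] (N : Submodule T (Fin p → T))
    (L : Submodule T ((Fin p → T) ⧸ N)) (d : ℕ)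
    (hL : ∀ m ∉ leadingMonomials bb (N : Set (Fin p → T)), d ≤ m.2.length →
      N.mkQ (monoBasis bb m) ∈ L) :
    Module.Finite Φ (((Fin p → T) ⧸ N) ⧸ L) := by
  let q : (Fin p → T) →ₗ[Φ] ((Fin p → T) ⧸ N) ⧸ L := (L.mkQ ∘ₗ N.mkQ).restrictScalars Φ
  let V : Submodule Φ (Fin p → T) := span Φ (monoBasis bb '' {m | m.2.length < d})
  have : FiniteDimensional Φ V := FiniteDimensional.span_of_finite Φ <| Set.Finite.image _ <|
    (Set.finite_univ.prod (List.finite_length_lt (Fin r) d)).subset fun m hm => ⟨trivial, hm⟩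
  have hle : N.restrictScalars Φ ⊔ span Φ (monoBasis bb '' (leadingMonomials bb
      (N : Set (Fin p → T)))ᶜ) ≤ V ⊔ LinearMap.ker q := by
    refine sup_le (fun f hf => mem_sup_right ?_) (span_le.mpr ?_)
    · have hf0 : N.mkQ f = 0 := (Quotient.mk_eq_zero N).mpr hf
      exact LinearMap.mem_ker.mpr (by simp [q, hf0])
    rintro _ ⟨m, hm, rfl⟩
    by_cases hlen : m.2.length < d
    · exact mem_sup_left (subset_span ⟨m, hlen, rfl⟩)
    · exact mem_sup_right (by simpa [q] using hL m hm (not_lt.mp hlen))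
  refine Module.Finite.of_surjective (q ∘ₗ V.subtype) fun x => ?_
  obtain ⟨f, rfl⟩ : ∃ f, q f = x := (L.mkQ_surjective.comp N.mkQ_surjective) x
  have hf := hle ((isCompl_span_monoBasis_compl_leadingMonomials (N.restrictScalars Φ)).sup_eq_top
    ▸ mem_top : f ∈ _)
  obtain ⟨v, hv, k, hk, rfl⟩ := mem_sup.mp hf
  exact ⟨⟨v, hv⟩, by simp [LinearMap.mem_ker.mp hk]⟩

end FiniteCodimension

theorem exists_free_submodule_finite_quotient {bb : Module.Basis (List (Fin r)) Φ T}
    (hbb : IsWordMultiplicative bb) [NeZero p]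
    (N : Submodule T (Fin p → T)) (hN : N.FG) :
    ∃ L : Submodule T ((Fin p → T) ⧸ N),
      Module.Finite Φ (((Fin p → T) ⧸ N) ⧸ L) ∧ Module.Free T L := by
  obtain ⟨G, hG, rfl⟩ := exists_isInterreduced_span_eq hbb N hN
  set Λ := leadingMonomials bb (span T (G : Set (Fin p → T)) : Set (Fin p → T))
  set d := G.sup fun g => (leadingMonomial bb g).2.length
  let S := {m : Fin p × List (Fin r) | m ∉ Λ ∧ m.2.length = d}
  have hS : ∀ m ∈ S, ∀ v, prepend v m ∉ Λ := fun m hm =>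
    hG.prepend_notMem_leadingMonomials hbb hm.1 fun g hg =>
      hm.2 ▸ Finset.le_sup (f := fun g => (leadingMonomial bb g).2.length) hg
  have hβ := linearIndependent_mkQ_monoBasis hbb _ (fun m (hm : m ∈ S) => hm.2) hS
  refine ⟨span T (Set.range _),
    finite_quotient_of_monoBasis_mem (bb := bb) _ _ d fun m hm hdm => ?_, .of_basis (.span hβ)⟩
  obtain ⟨v, m', hm'd, rfl⟩ := exists_eq_prepend_of_le_length hdm
  have hm' : m' ∉ Λ := fun h => hm (prepend_mem_leadingMonomials hbb _ h v)
  rw [← smul_monoBasis hbb, map_smul]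
  exact smul_mem _ _ (subset_span ⟨⟨m', hm', hm'd⟩, rfl⟩)

theorem exists_isWordMultiplicative_basis_freeAlgebra_op (Φ X : Type*) [Field Φ] :
    ∃ bb : Module.Basis (List X) Φ (FreeAlgebra Φ X)ᵐᵒᵖ, IsWordMultiplicative bb := by
  let B := FreeAlgebra.basisFreeMonoid Φ X
  have hB : ∀ x y, B x * B y = B (x * y) := fun x y => by
    simp [B, FreeAlgebra.basisFreeMonoid, ← map_mul]
  -- words are reversed since multiplication in `Rᵐᵒᵖ` is that of `R` read backwards
  let rev : FreeMonoid X ≃ List X := FreeMonoid.toList.trans (List.reverse_involutive.toPerm _)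
  refine ⟨(B.map (opLinearEquiv Φ)).reindex rev, fun v w => ?_⟩
  simp [rev, ← op_mul, hB]

end WordAlgebra

theorem finitely_presented_has_free_submodule_of_finite_codim_general
    (Φ : Type) [Field Φ] (r p : ℕ)
    (N : Submodule (FreeAlgebra Φ (Fin r))ᵐᵒᵖ (Fin p → (FreeAlgebra Φ (Fin r))ᵐᵒᵖ))
    (hN : N.FG) :
    ∃ L : Submodule (FreeAlgebra Φ (Fin r))ᵐᵒᵖ
        ((Fin p → (FreeAlgebra Φ (Fin r))ᵐᵒᵖ) ⧸ N),
      FiniteDimensional Φ (((Fin p → (FreeAlgebra Φ (Fin r))ᵐᵒᵖ) ⧸ N) ⧸ L) ∧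
      Module.Free (FreeAlgebra Φ (Fin r))ᵐᵒᵖ L := by
  rcases p.eq_zero_or_pos with rfl | hp
  · exact ⟨⊥, inferInstance, inferInstance⟩
  have : NeZero p := ⟨hp.ne'⟩
  obtain ⟨bb, hbb⟩ := WordAlgebra.exists_isWordMultiplicative_basis_freeAlgebra_op Φ (Fin r)
  exact WordAlgebra.exists_free_submodule_finite_quotient hbb N hN

/-- A finitely presented right module `M = F/N` over the free associative algebra
`R = Φ⟨x_1,…,x_r⟩` (right modules formalized as left modules over `Rᵐᵒᵖ`) has a free
submodule of finite codimension over `Φ`. -/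
theorem finitely_presented_has_free_submodule_of_finite_codim
    (Φ : Type) [Field Φ] (r p : ℕ) (hr : 1 ≤ r)
    (N : Submodule (FreeAlgebra Φ (Fin r))ᵐᵒᵖ (Fin p → (FreeAlgebra Φ (Fin r))ᵐᵒᵖ))
    (hN : N.FG) :
    ∃ L : Submodule (FreeAlgebra Φ (Fin r))ᵐᵒᵖ
        ((Fin p → (FreeAlgebra Φ (Fin r))ᵐᵒᵖ) ⧸ N),
      FiniteDimensional Φ (((Fin p → (FreeAlgebra Φ (Fin r))ᵐᵒᵖ) ⧸ N) ⧸ L) ∧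
      Module.Free (FreeAlgebra Φ (Fin r))ᵐᵒᵖ L :=
  finitely_presented_has_free_submodule_of_finite_codim_general Φ r p N hN

end
end

section
/- Let Φ be a field, R = Φ⟨x_1,…,x_r⟩ the free associative algebra of finite rank r ≥ 1 over Φ, and let M be a right R-module given by p generators and q defining relations, i.e. M = F/N where F is the free right R-module of rank p and N is a submodule generated by q elements. If q < p, then M is infinite-dimensional as a Φ-vector space. -/
/-!
Sending every generator of `Φ⟨x_1,…,x_r⟩` to `X` is a surjection onto the commutative domain
`Φ[X]`, so `M` surjects `Φ`-linearly onto `Φ[X]^p / N'`, where `N'` is spanned by the `q` images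
of the relations. Over `Φ[X]` rank is additive and `rank N' ≤ q < p`, so some `m` has
`a • m ∉ N'` for every `a ≠ 0`. Then `a ↦ a • m` embeds `Φ[X]` into `Φ[X]^p / N'`, which is
therefore infinite-dimensional, and hence so is `M`.
-/

open MulOpposite Polynomial

universe u

theorem Submodule.exists_smul_notMem_span_range_of_lt {S : Type u} [Ring S]
    [StrongRankCondition S] [HasRankNullity.{u} S] {p q : ℕ} (hqp : q < p)
    (v : Fin q → Fin p → S) :
    ∃ m : Fin p → S, ∀ a : S, a ≠ 0 → a • m ∉ Submodule.span S (Set.range v) := by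
  apply Submodule.exists_smul_notMem_of_rank_lt
  calc Module.rank S (Submodule.span S (Set.range v)) ≤ Cardinal.mk (Set.range v) :=
        rank_span_le _
    _ ≤ q := by simpa using Cardinal.mk_range_le_lift (f := v)
    _ < p := by exact_mod_cast hqp
    _ = Module.rank S (Fin p → S) := (rank_fin_fun p).symm

theorem Submodule.not_finite_quotient_of_forall_smul_notMem {Φ S M : Type*} [Field Φ] [Ring S]
    [Algebra Φ S] [AddCommGroup M] [Module S M] [Module Φ M] [IsScalarTower Φ S M]
    (hS : ¬ Module.Finite Φ S) {N : Submodule S M} {m : M} (hm : ∀ a : S, a ≠ 0 → a • m ∉ N) :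
    ¬ Module.Finite Φ (M ⧸ N) := by
  intro hfin
  let orbit : S →ₗ[Φ] M ⧸ N :=
    N.mkQ.restrictScalars Φ ∘ₗ (LinearMap.toSpanSingleton S M m).restrictScalars Φ
  have horbit : Function.Injective orbit := by
    refine (injective_iff_map_eq_zero orbit).2 fun a ha => ?_
    by_contra ha0
    exact hm a ha0 ((Submodule.Quotient.mk_eq_zero N).1 ha)
  exact hS (Module.Finite.of_injective orbit horbit)

theorem Module.Finite.quotient_span_range_map {Φ A B ι κ : Type*} [CommRing Φ] [Ring A]
    [Ring B] [Algebra Φ A] [Algebra Φ B] [Fintype ι] (f : A →ₐ[Φ] B)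
    (hf : Function.Surjective f) (v : ι → κ → A)
    [Module.Finite Φ ((κ → A) ⧸ Submodule.span A (Set.range v))] :
    Module.Finite Φ ((κ → B) ⧸ Submodule.span B (Set.range fun j i => f (v j i))) := by
  set N := Submodule.span A (Set.range v)
  set N' := Submodule.span B (Set.range fun j i => f (v j i))
  let g : (κ → A) →ₗ[Φ] (κ → B) ⧸ N' := N'.mkQ.restrictScalars Φ ∘ₗ f.toLinearMap.compLeft κ
  have hg : Function.Surjective g := N'.mkQ_surjective.comp fun y =>
    ⟨fun i => (hf (y i)).choose, funext fun i => (hf (y i)).choose_spec⟩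
  have hN : N.restrictScalars Φ ≤ LinearMap.ker g := by
    intro x hx
    obtain ⟨a, rfl⟩ := (Submodule.mem_span_range_iff_exists_fun A).1 hx
    refine (Submodule.Quotient.mk_eq_zero N').2 <|
      (Submodule.mem_span_range_iff_exists_fun B).2 ⟨fun j => f (a j), funext fun i => ?_⟩
    simp
  have : Module.Finite Φ ((κ → A) ⧸ N.restrictScalars Φ) :=
    Module.Finite.equiv (Submodule.Quotient.restrictScalarsEquiv Φ N).symm
  exact Module.Finite.of_surjective ((N.restrictScalars Φ).liftQ g hN)
    (Function.Surjective.of_comp (g := (N.restrictScalars Φ).mkQ) hg)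

theorem FreeAlgebra.lift_const_X_surjective (Φ σ : Type*) [CommRing Φ] [Nonempty σ] :
    Function.Surjective (FreeAlgebra.lift Φ fun _ : σ => (X : Φ[X])) := by
  rw [← AlgHom.range_eq_top, eq_top_iff, ← Polynomial.adjoin_X, Algebra.adjoin_le_iff,
    Set.singleton_subset_iff]
  obtain ⟨i⟩ := ‹Nonempty σ›
  exact ⟨FreeAlgebra.ι Φ i, FreeAlgebra.lift_ι_apply _ _⟩

/-- A right module over the free associative algebra `R = Φ⟨x_1,…,x_r⟩` (right modules
formalized as left modules over `Rᵐᵒᵖ`) given by `p` generators and `q < p` relations is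
infinite-dimensional over `Φ`. -/
theorem infinite_dimensional_of_fewer_relations
    (Φ : Type) [Field Φ] (r p q : ℕ) (hr : 1 ≤ r) (hqp : q < p)
    (v : Fin q → (Fin p → (FreeAlgebra Φ (Fin r))ᵐᵒᵖ)) :
    ¬ FiniteDimensional Φ
        ((Fin p → (FreeAlgebra Φ (Fin r))ᵐᵒᵖ) ⧸
          Submodule.span (FreeAlgebra Φ (Fin r))ᵐᵒᵖ (Set.range v)) := by
  have : Nonempty (Fin r) := ⟨⟨0, hr⟩⟩
  let f : (FreeAlgebra Φ (Fin r))ᵐᵒᵖ →ₐ[Φ] Φ[X] :=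
    (FreeAlgebra.lift Φ fun _ => X).fromOpposite fun _ _ => Commute.all _ _
  have hf : Function.Surjective f :=
    (FreeAlgebra.lift_const_X_surjective Φ (Fin r)).comp unop_surjective
  obtain ⟨m, hm⟩ := Submodule.exists_smul_notMem_span_range_of_lt hqp fun j i => f (v j i)
  intro hfin
  exact Submodule.not_finite_quotient_of_forall_smul_notMem Polynomial.not_finite hm
    (Module.Finite.quotient_span_range_map f hf v)
end

section
/- Let Φ be a field, R = Φ⟨x_1,…,x_r⟩ the free associative algebra of rank r > 1 over Φ, and let 1 ≤ s ≤ r. Let M = F/N, where F is the free right R-module of rank s with basis u_1,…,u_s and N is the cyclic submodule generated by u_1x_1 + ⋯ + u_sx_s. Then every R-module homomorphism M → R is zero; in particular M admits no surjective homomorphism onto R (M is a bound module). -/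
/-!
A homomorphism `φ : M → R` is determined by the elements `c_j = φ(u_j)`, and these satisfy
`c_1 x_1 + ⋯ + c_s x_s = 0` in `R`. In a free algebra the right multiples `R x_j` of distinct
generators form a direct sum, because the last letter of a monomial tells which summand it
comes from. Hence every `c_j` vanishes.
-/

noncomputable section

open MulOpposite

/-- The relator `u_1 x_1 + ⋯ + u_s x_s` in the free right module `F` of rank `s` over
`R = Φ⟨x_1,…,x_r⟩` (right modules formalized as left modules over `Rᵐᵒᵖ`),
`u_1,…,u_s` being the standard basis of `F` and `s ≤ r`. -/
def relator (Φ : Type) [Field Φ] (r s : ℕ) (hsr : s ≤ r) :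
    Fin s → (FreeAlgebra Φ (Fin r))ᵐᵒᵖ :=
  fun j => op (FreeAlgebra.ι Φ (Fin.castLE hsr j))

open Function

theorem FreeMonoid.eq_of_mul_of_eq_mul_of {α : Type*} {w d : FreeMonoid α} {x y : α}
    (h : w * of x = d * of y) : x = y :=
  List.singleton_injective (List.append_inj' (congrArg toList h) rfl).2

namespace MonoidAlgebra

variable {k X : Type*} [Semiring k]

theorem coeff_mul_single_of_mul_of [DecidableEq X] (a : MonoidAlgebra k (FreeMonoid X))
    (x y : X) (w : FreeMonoid X) :
    (a * single (FreeMonoid.of x) 1).coeff (w * FreeMonoid.of y) =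
      if x = y then a.coeff w else 0 := by
  split_ifs with hxy
  · subst hxy
    simp
  · exact coeff_mul_single_of_forall_mul_ne _ _ fun d h =>
      hxy (FreeMonoid.eq_of_mul_of_eq_mul_of h)

theorem eq_zero_of_sum_mul_single_of_eq_zero {ι : Type*} [Fintype ι] {f : ι → X}
    (hf : Injective f) {b : ι → MonoidAlgebra k (FreeMonoid X)}
    (h : ∑ i, b i * single (FreeMonoid.of (f i)) 1 = 0) (i : ι) : b i = 0 := by
  classical
  ext w
  simpa [coeff_sum, coeff_mul_single_of_mul_of, hf.eq_iff] using
    congrArg (fun a => a.coeff (w * FreeMonoid.of (f i))) h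

end MonoidAlgebra

namespace FreeAlgebra

variable {R X : Type*} [CommSemiring R]

theorem equivMonoidAlgebraFreeMonoid_ι (x : X) :
    equivMonoidAlgebraFreeMonoid (ι R x) = MonoidAlgebra.single (FreeMonoid.of x) 1 := by
  simp [equivMonoidAlgebraFreeMonoid]

theorem eq_zero_of_sum_mul_ι_eq_zero {κ : Type*} [Fintype κ] {f : κ → X} (hf : Injective f)
    {b : κ → FreeAlgebra R X} (h : ∑ i, b i * ι R (f i) = 0) (i : κ) : b i = 0 := by
  have h' := congrArg equivMonoidAlgebraFreeMonoid h
  simp only [map_sum, map_mul, equivMonoidAlgebraFreeMonoid_ι, map_zero] at h'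
  simpa using MonoidAlgebra.eq_zero_of_sum_mul_single_of_eq_zero hf h' i

end FreeAlgebra

theorem Submodule.sum_mul_apply_mk_single_eq_zero {S ι : Type*} [Ring S] [Fintype ι]
    [DecidableEq ι] (v : ι → S) (ψ : ((ι → S) ⧸ span S {v}) →ₗ[S] S) :
    ∑ i, v i * ψ (Quotient.mk (Pi.single i 1)) = 0 := by
  have hv : (Quotient.mk v : (ι → S) ⧸ span S {v}) = 0 :=
    (Quotient.mk_eq_zero _).2 (mem_span_singleton_self v)
  have hsingle (i : ι) : (fun j => if i = j then (1 : S) else 0) = Pi.single i 1 := by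
    ext j
    simp [Pi.single_apply, eq_comm]
  simpa [hv, hsingle] using ((ψ.comp (span S {v}).mkQ).pi_apply_eq_sum_univ v).symm

theorem bound_module_example_is_bound_general
    (Φ : Type) [Field Φ] (r s : ℕ) (hsr : s ≤ r) :
    ∀ φ : ((Fin s → (FreeAlgebra Φ (Fin r))ᵐᵒᵖ) ⧸
        Submodule.span (FreeAlgebra Φ (Fin r))ᵐᵒᵖ {relator Φ r s hsr})
        →ₗ[(FreeAlgebra Φ (Fin r))ᵐᵒᵖ] (FreeAlgebra Φ (Fin r))ᵐᵒᵖ,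
      φ = 0 := by
  intro φ
  ext j
  have hrel := congrArg unop (Submodule.sum_mul_apply_mk_single_eq_zero _ φ)
  simp only [Finset.unop_sum, unop_mul, relator, unop_op, unop_zero] at hrel
  simpa using FreeAlgebra.eq_zero_of_sum_mul_ι_eq_zero (Fin.castLE_injective hsr) hrel j

/-- The module `M = ⟨u_1,…,u_s | u_1x_1 + ⋯ + u_sx_s = 0⟩` over the free associative
algebra `R = Φ⟨x_1,…,x_r⟩` with `1 < r` and `1 ≤ s ≤ r` (right modules formalized as
left modules over `Rᵐᵒᵖ`) is bound: every `R`-module homomorphism `M → R` is zero;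
in particular `M` admits no surjective homomorphism onto `R`. -/
theorem bound_module_example_is_bound
    (Φ : Type) [Field Φ] (r s : ℕ) (hr : 1 < r) (hs : 1 ≤ s) (hsr : s ≤ r) :
    ∀ φ : ((Fin s → (FreeAlgebra Φ (Fin r))ᵐᵒᵖ) ⧸
        Submodule.span (FreeAlgebra Φ (Fin r))ᵐᵒᵖ {relator Φ r s hsr})
        →ₗ[(FreeAlgebra Φ (Fin r))ᵐᵒᵖ] (FreeAlgebra Φ (Fin r))ᵐᵒᵖ,
      φ = 0 :=
  bound_module_example_is_bound_general Φ r s hsr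
end
end
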